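/- arXiv:1906.11006 — 15 statements merged into one kernel-verified Lean document; each statement's English description precedes it below -/
import Mathlib

section
/- Let A and B be associative unital rings and let φ, ψ : A → B be ring isomorphisms. For b ∈ B let R_b : B → B denote right multiplication x ↦ x·b. Then the assignment b ↦ R_b defines a bijection from the set { b ∈ Bˣ : φ(a) = b·ψ(a)·b⁻¹ for all a ∈ A } onto the set of bijective maps f : B → B that are additive, left B-linear (f(c·x) = c·f(x) for all c, x ∈ B), and satisfy f(x·φ(a)) = f(x)·ψ(a) for all x ∈ B and a ∈ A. -/
/-- For ring isomorphisms `φ ψ : A → B`, the map `b ↦ (x ↦ x * b)`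
is a bijection from `{ b ∈ Bˣ : φ(a) = b·ψ(a)·b⁻¹ for all a }` onto the set of
bijective, additive, left `B`-linear maps `f : B → B` with `f(x·φ(a)) = f(x)·ψ(a)`. -/
theorem stmt_1 {A B : Type*} [Ring A] [Ring B] (φ ψ : A ≃+* B) :
    ∃ Υ : {b : Bˣ // ∀ a : A, φ a = (b : B) * ψ a * ((b⁻¹ : Bˣ) : B)} →
        {f : B ≃ B // (∀ x y : B, f (x + y) = f x + f y) ∧
          (∀ c x : B, f (c * x) = c * f x) ∧
          (∀ (x : B) (a : A), f (x * φ a) = f x * ψ a)},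
      (∀ b x, (Υ b).1 x = x * ((b.1 : Bˣ) : B)) ∧ Function.Bijective Υ := by
  refine ⟨fun b => ⟨⟨fun x => x * (b.1 : B), fun x => x * ((b.1⁻¹ : Bˣ) : B),
      fun x => by simp [mul_assoc], fun x => by simp [mul_assoc]⟩,
      fun x y => add_mul x y _, fun c x => mul_assoc c x _,
      fun x a => by
        simp [b.2 a, mul_assoc]⟩,
    fun b x => rfl, ?_, ?_⟩
  · intro b b' h
    have : (b.1 : B) = (b'.1 : B) := by
      have := congrArg (fun f => f.1 1) h
      simpa using this
    exact Subtype.ext (Units.ext this)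
  · rintro ⟨f, hadd, hlin, hint⟩
    have hf : ∀ x : B, f x = x * f 1 := fun x => by
      have := hlin x 1; simpa using this
    have hg : ∀ x : B, f.symm x = x * f.symm 1 := fun x => by
      have := hlin x (f.symm 1)
      have h2 : f (x * f.symm 1) = x := by rw [this, f.apply_symm_apply, mul_one]
      calc f.symm x = f.symm (f (x * f.symm 1)) := by rw [h2]
        _ = x * f.symm 1 := f.symm_apply_apply _
    have h1 : f.symm 1 * f 1 = 1 := by
      have := hf (f.symm 1); rw [f.apply_symm_apply] at this; exact this.symm
    have h2 : f 1 * f.symm 1 = 1 := by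
      have := hg (f 1); rw [f.symm_apply_apply] at this; exact this.symm
    set u : Bˣ := ⟨f 1, f.symm 1, h2, h1⟩ with hu
    have hcond : ∀ a : A, φ a = (u : B) * ψ a * ((u⁻¹ : Bˣ) : B) := by
      intro a
      have h3 : φ a * f 1 = f 1 * ψ a := by
        have := hint 1 a; rwa [one_mul, hf (φ a)] at this
      calc φ a = φ a * f 1 * f.symm 1 := by rw [mul_assoc, h2, mul_one]
        _ = f 1 * ψ a * f.symm 1 := by rw [h3]
    refine ⟨⟨u, hcond⟩, ?_⟩
    apply Subtype.ext
    ext x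
    exact (hf x).symm
end

section
/- Let 𝒢 = (G₂ →∂ G₁) be a crossed module and let (A, ω₁, ω₂, ω₃) be a trivially graded N-weak 𝒢-algebra. Then for all x₁, x₂ ∈ G₂ and g ∈ G₁ the identity ω₃(∂x₂, ∂(x₁)·g) · ω₂(x₂) · ω₃(∂x₁, g) · ω₂(x₁) = ω₃(∂(x₂x₁), g) · ω₂(x₂x₁) holds in the group of units Aˣ. -/
/-- In a trivially graded N-weak `𝒢`-algebra `(A, ω₁, ω₂, ω₃)` over a
crossed module `𝒢 = (G₂ →d G₁)`, the identity
`ω₃(∂x₂, ∂x₁·g)·ω₂(x₂)·ω₃(∂x₁, g)·ω₂(x₁) = ω₃(∂(x₂x₁), g)·ω₂(x₂x₁)` holds in `Aˣ`. -/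
theorem stmt_3 {G₁ G₂ A : Type*} [Group G₁] [Group G₂] [Ring A]
    (act : G₁ →* MulAut G₂) (d : G₂ →* G₁)
    (hdact : ∀ (g : G₁) (x : G₂), d (act g x) = g * d x * g⁻¹)
    (hPeiffer : ∀ y x : G₂, act (d y) x = y * x * y⁻¹)
    (ω₁ : G₁ → A ≃+* A) (hω₁e : ω₁ 1 = RingEquiv.refl A)
    (ω₂ : G₂ → Aˣ) (hω₂e : ω₂ 1 = 1)
    (ω₃ : G₁ → G₁ → Aˣ)
    (hω₃l : ∀ g : G₁, ω₃ 1 g = 1) (hω₃r : ∀ g : G₁, ω₃ g 1 = 1)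
    (hax1 : ∀ (g₂ g₁ : G₁) (a : A),
      ω₁ (g₂ * g₁) a = (ω₃ g₂ g₁ : A) * ω₁ g₂ (ω₁ g₁ a) * (((ω₃ g₂ g₁)⁻¹ : Aˣ) : A))
    (hax2 : ∀ x₂ x₁ : G₂, ω₂ (x₂ * x₁) = ω₃ (d x₂) (d x₁) * ω₂ x₂ * ω₂ x₁)
    (hax3 : ∀ (x : G₂) (a : A),
      ω₁ (d x) a = (ω₂ x : A) * a * (((ω₂ x)⁻¹ : Aˣ) : A))
    (hax4 : ∀ g₃ g₂ g₁ : G₁,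
      (ω₃ (g₃ * g₂) g₁ : A) * (ω₃ g₃ g₂ : A)
        = (ω₃ g₃ (g₂ * g₁) : A) * ω₁ g₃ ((ω₃ g₂ g₁ : Aˣ) : A))
    (hax5 : ∀ (g : G₁) (x : G₂),
      (ω₂ (act g x) : A)
        = (ω₃ (g * d x) g⁻¹ : A) * (ω₃ g (d x) : A) * ω₁ g ((ω₂ x : Aˣ) : A)
          * (((ω₃ g g⁻¹)⁻¹ : Aˣ) : A)) :
    ∀ (x₂ x₁ : G₂) (g : G₁),
      ω₃ (d x₂) (d x₁ * g) * ω₂ x₂ * ω₃ (d x₁) g * ω₂ x₁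
        = ω₃ (d (x₂ * x₁)) g * ω₂ (x₂ * x₁) := by
  intro x₂ x₁ g
  apply Units.ext
  have h3 := hax3 x₂ ((ω₃ (d x₁) g : Aˣ) : A)
  have h4 := hax4 (d x₂) (d x₁) g
  rw [h3] at h4
  simp only [hax2, map_mul, Units.val_mul]
  calc (ω₃ (d x₂) (d x₁ * g) : A) * ω₂ x₂ * ω₃ (d x₁) g * ω₂ x₁
      = (ω₃ (d x₂) (d x₁ * g) : A) * ((ω₂ x₂ : A) * ω₃ (d x₁) g * ((ω₂ x₂)⁻¹ : Aˣ))
        * ((ω₂ x₂ : A) * ω₂ x₁) := by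
        rw [mul_assoc, mul_assoc, mul_assoc, mul_assoc, ← mul_assoc ((((ω₂ x₂)⁻¹ : Aˣ)) : A),
          Units.inv_mul, one_mul]
        simp [mul_assoc]
    _ = (ω₃ (d x₂ * d x₁) g : A) * (ω₃ (d x₂) (d x₁) : A) * ((ω₂ x₂ : A) * ω₂ x₁) := by
        rw [h4, mul_assoc]
    _ = (ω₃ (d x₂ * d x₁) g : A) * ((ω₃ (d x₂) (d x₁) : A) * ω₂ x₂ * ω₂ x₁) := by
        rw [mul_assoc, mul_assoc]
end

section
/- Let 𝒢 = (G₂ →∂ G₁) be a crossed module and let (A, ω₁, ω₂, ω₃) be a trivially graded N-weak 𝒢-algebra. Then for all g₁, g₂ ∈ G₁ and x₁, x₂ ∈ G₂ the identity ω₃(∂(x₂·ᵍ²x₁), g₂g₁) · ω₂(x₂·ᵍ²x₁) · ω₃(g₂, g₁) = ω₃(∂(x₂)·g₂, ∂(x₁)·g₁) · ω₁(∂(x₂)·g₂)( ω₃(∂x₁, g₁) · ω₂(x₁) ) · ω₃(∂x₂, g₂) · ω₂(x₂) holds in Aˣ, where ᵍ²x₁ denotes the action of g₂ on x₁. -/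
section Spade
variable {G₁ A : Type*} [Group G₁] [Ring A]

/-- crossed-product style multiplication on `Aˣ × G₁`. -/
def sMul (Ω : G₁ → (Aˣ →* Aˣ)) (ω₃ : G₁ → G₁ → Aˣ) (p q : Aˣ × G₁) : Aˣ × G₁ :=
  (ω₃ p.2 q.2 * Ω p.2 q.1 * p.1, p.2 * q.2)

lemma sMul_assoc (Ω : G₁ → (Aˣ →* Aˣ)) (ω₃ : G₁ → G₁ → Aˣ)
    (hax1 : ∀ (g₂ g₁ : G₁) (u : Aˣ), Ω (g₂ * g₁) u = ω₃ g₂ g₁ * Ω g₂ (Ω g₁ u) * (ω₃ g₂ g₁)⁻¹)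
    (hax4 : ∀ g₃ g₂ g₁ : G₁, ω₃ (g₃ * g₂) g₁ * ω₃ g₃ g₂ = ω₃ g₃ (g₂ * g₁) * Ω g₃ (ω₃ g₂ g₁))
    (p q r : Aˣ × G₁) :
    sMul Ω ω₃ (sMul Ω ω₃ p q) r = sMul Ω ω₃ p (sMul Ω ω₃ q r) := by
  unfold sMul
  refine Prod.ext ?_ (mul_assoc _ _ _)
  dsimp
  rw [hax1, map_mul, map_mul]
  have h := hax4 p.2 q.2 r.2
  calc ω₃ (p.2 * q.2) r.2 * (ω₃ p.2 q.2 * Ω p.2 (Ω q.2 r.1) * (ω₃ p.2 q.2)⁻¹) *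
        (ω₃ p.2 q.2 * Ω p.2 q.1 * p.1)
      = (ω₃ (p.2 * q.2) r.2 * ω₃ p.2 q.2) * (Ω p.2 (Ω q.2 r.1) * Ω p.2 q.1 * p.1) := by group
    _ = (ω₃ p.2 (q.2 * r.2) * Ω p.2 (ω₃ q.2 r.2)) * (Ω p.2 (Ω q.2 r.1) * Ω p.2 q.1 * p.1) := by
        rw [h]
    _ = _ := by group

end Spade

/-- In a trivially graded N-weak `𝒢`-algebra, the '♠' identity
`ω₃(∂(x₂·ᵍ²x₁), g₂g₁)·ω₂(x₂·ᵍ²x₁)·ω₃(g₂,g₁) =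
 ω₃(∂(x₂)g₂, ∂(x₁)g₁)·ω₁(∂(x₂)g₂)(ω₃(∂x₁,g₁)·ω₂(x₁))·ω₃(∂x₂,g₂)·ω₂(x₂)` holds. -/
theorem stmt_4 {G₁ G₂ A : Type*} [Group G₁] [Group G₂] [Ring A]
    (act : G₁ →* MulAut G₂) (d : G₂ →* G₁)
    (hdact : ∀ (g : G₁) (x : G₂), d (act g x) = g * d x * g⁻¹)
    (hPeiffer : ∀ y x : G₂, act (d y) x = y * x * y⁻¹)
    (ω₁ : G₁ → A ≃+* A) (hω₁e : ω₁ 1 = RingEquiv.refl A)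
    (ω₂ : G₂ → Aˣ) (hω₂e : ω₂ 1 = 1)
    (ω₃ : G₁ → G₁ → Aˣ)
    (hω₃l : ∀ g : G₁, ω₃ 1 g = 1) (hω₃r : ∀ g : G₁, ω₃ g 1 = 1)
    (hax1 : ∀ (g₂ g₁ : G₁) (a : A),
      ω₁ (g₂ * g₁) a = (ω₃ g₂ g₁ : A) * ω₁ g₂ (ω₁ g₁ a) * (((ω₃ g₂ g₁)⁻¹ : Aˣ) : A))
    (hax2 : ∀ x₂ x₁ : G₂, ω₂ (x₂ * x₁) = ω₃ (d x₂) (d x₁) * ω₂ x₂ * ω₂ x₁)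
    (hax3 : ∀ (x : G₂) (a : A),
      ω₁ (d x) a = (ω₂ x : A) * a * (((ω₂ x)⁻¹ : Aˣ) : A))
    (hax4 : ∀ g₃ g₂ g₁ : G₁,
      (ω₃ (g₃ * g₂) g₁ : A) * (ω₃ g₃ g₂ : A)
        = (ω₃ g₃ (g₂ * g₁) : A) * ω₁ g₃ ((ω₃ g₂ g₁ : Aˣ) : A))
    (hax5 : ∀ (g : G₁) (x : G₂),
      (ω₂ (act g x) : A)
        = (ω₃ (g * d x) g⁻¹ : A) * (ω₃ g (d x) : A) * ω₁ g ((ω₂ x : Aˣ) : A)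
          * (((ω₃ g g⁻¹)⁻¹ : Aˣ) : A)) :
    ∀ (g₂ g₁ : G₁) (x₂ x₁ : G₂),
      (ω₃ (d (x₂ * act g₂ x₁)) (g₂ * g₁) : A) * (ω₂ (x₂ * act g₂ x₁) : A)
          * (ω₃ g₂ g₁ : A)
        = (ω₃ (d x₂ * g₂) (d x₁ * g₁) : A)
          * ω₁ (d x₂ * g₂) ((ω₃ (d x₁) g₁ : A) * (ω₂ x₁ : A))
          * (ω₃ (d x₂) g₂ : A) * (ω₂ x₂ : A) := by
  intro g₂ g₁ x₂ x₁
  -- lift ω₁ to the units group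
  set Ω : G₁ → (Aˣ →* Aˣ) := fun g => Units.map ((ω₁ g).toRingHom.toMonoidHom) with hΩ
  have hΩcoe : ∀ (g : G₁) (u : Aˣ), ((Ω g u : Aˣ) : A) = ω₁ g (u : A) := fun g u => rfl
  -- unit-level versions of the axioms
  have hax1' : ∀ (g₂ g₁ : G₁) (u : Aˣ),
      Ω (g₂ * g₁) u = ω₃ g₂ g₁ * Ω g₂ (Ω g₁ u) * (ω₃ g₂ g₁)⁻¹ := by
    intro a b u
    ext
    simpa [hΩcoe] using hax1 a b (u : A)
  have hax3' : ∀ (x : G₂) (u : Aˣ), Ω (d x) u = ω₂ x * u * (ω₂ x)⁻¹ := by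
    intro x u
    ext
    simpa [hΩcoe] using hax3 x (u : A)
  have hax4' : ∀ g₃ g₂ g₁ : G₁,
      ω₃ (g₃ * g₂) g₁ * ω₃ g₃ g₂ = ω₃ g₃ (g₂ * g₁) * Ω g₃ (ω₃ g₂ g₁) := by
    intro a b c
    ext
    simpa [hΩcoe] using hax4 a b c
  have hax5' : ∀ (g : G₁) (x : G₂),
      ω₂ (act g x) = ω₃ (g * d x) g⁻¹ * ω₃ g (d x) * Ω g (ω₂ x) * (ω₃ g g⁻¹)⁻¹ := by
    intro g x
    ext
    simpa [hΩcoe] using hax5 g x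
  -- `Ω g (ω₃ g⁻¹ g) = ω₃ g g⁻¹`
  have key0 : ∀ g : G₁, Ω g (ω₃ g⁻¹ g) = ω₃ g g⁻¹ := by
    intro g
    have h := hax4' g g⁻¹ g
    simpa [hω₃l, hω₃r] using h.symm
  -- the pair elements
  set m : (Aˣ × G₁) → (Aˣ × G₁) → (Aˣ × G₁) := sMul Ω ω₃ with hm
  have massoc : ∀ p q r, m (m p q) r = m p (m q r) := sMul_assoc Ω ω₃ hax1' hax4'
  set W : G₂ → Aˣ × G₁ := fun x => (ω₂ x, d x) with hW
  set E : G₁ → Aˣ × G₁ := fun g => ((1 : Aˣ), g) with hE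
  -- W is multiplicative
  have hWmul : ∀ x₂ x₁ : G₂, m (W x₂) (W x₁) = W (x₂ * x₁) := by
    intro a b
    refine Prod.ext ?_ (by simp [hm, hW, sMul])
    show ω₃ (d a) (d b) * Ω (d a) (ω₂ b) * ω₂ a = ω₂ (a * b)
    rw [hax3' a (ω₂ b), hax2 a b]
    group
  -- the exchange relation  E g * W x = W (act g x) * E g
  have hexch : ∀ (g : G₁) (x : G₂), m (E g) (W x) = m (W (act g x)) (E g) := by
    intro g x
    have h2 : g * d x = d (act g x) * g := by rw [hdact]; group
    have h1 : ω₃ g (d x) * Ω g (ω₂ x) * 1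
        = ω₃ (d (act g x)) g * Ω (d (act g x)) 1 * ω₂ (act g x) := by
      rw [map_one, mul_one, mul_one, hax5' g x, hdact g x]
      have h4 : ω₃ (g * d x * g⁻¹) g = Ω (g * d x) (ω₃ g⁻¹ g) * (ω₃ (g * d x) g⁻¹)⁻¹ := by
        have h := hax4' (g * d x) g⁻¹ g
        rw [inv_mul_cancel, hω₃r, one_mul] at h
        rw [← h]; group
      have hconj : Ω (g * d x) (ω₃ g⁻¹ g)
          = (ω₃ g (d x) * Ω g (ω₂ x)) * ω₃ g g⁻¹ * (ω₃ g (d x) * Ω g (ω₂ x))⁻¹ := by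
        rw [hax1', hax3', map_mul, map_mul, map_inv, key0]
        group
      rw [h4, hconj]
      group
    exact Prod.ext h1 h2
  -- main pair identity
  have hpair : m (W (x₂ * act g₂ x₁)) (m (E g₂) (E g₁))
      = m (m (W x₂) (E g₂)) (m (W x₁) (E g₁)) := by
    rw [← hWmul, massoc, massoc, ← massoc (E g₂) (W x₁) (E g₁), hexch, massoc]
  -- extract the first component
  have hmain := congrArg Prod.fst hpair
  simp only [hm, sMul, hW, hE, map_one, mul_one] at hmain
  rw [hax3' (x₂ * act g₂ x₁) (ω₃ g₂ g₁)] at hmain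
  have hu : ω₃ (d (x₂ * act g₂ x₁)) (g₂ * g₁) * ω₂ (x₂ * act g₂ x₁) * ω₃ g₂ g₁
      = ω₃ (d x₂ * g₂) (d x₁ * g₁) * Ω (d x₂ * g₂) (ω₃ (d x₁) g₁ * ω₂ x₁)
        * ω₃ (d x₂) g₂ * ω₂ x₂ := by
    calc ω₃ (d (x₂ * act g₂ x₁)) (g₂ * g₁) * ω₂ (x₂ * act g₂ x₁) * ω₃ g₂ g₁
        = ω₃ (d (x₂ * act g₂ x₁)) (g₂ * g₁)
            * (ω₂ (x₂ * act g₂ x₁) * ω₃ g₂ g₁ * (ω₂ (x₂ * act g₂ x₁))⁻¹)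
            * ω₂ (x₂ * act g₂ x₁) := by group
      _ = _ := by rw [hmain]; group
  rw [show (ω₁ (d x₂ * g₂)) ((ω₃ (d x₁) g₁ : A) * (ω₂ x₁ : A))
      = ((Ω (d x₂ * g₂) (ω₃ (d x₁) g₁ * ω₂ x₁) : Aˣ) : A) from rfl]
  exact_mod_cast hu
end

section
/- Let 𝒢 = (G₂ →∂ G₁) be a crossed module and let (A, ω₁, ω₂, ω₃) be a trivially graded N-weak 𝒢-algebra. Then the operation (a,x)·(b,y) := (a · (ω₂(x)·b·ω₂(x)⁻¹) · ω₃(∂x, ∂y)⁻¹, x·y) on Aˣ × G₂ is associative, (1, e) is a two-sided identity, and each element (a,x) has two-sided inverse (ω₃(∂(x⁻¹), ∂x) · (ω₂(x⁻¹)·a⁻¹·ω₂(x⁻¹)⁻¹), x⁻¹); hence Aˣ × G₂ is a group H₂ under this operation, the projection (a,x) ↦ x is a surjective group homomorphism H₂ → G₂ with kernel {(a,e) : a ∈ Aˣ}. -/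
/-- The twisted product `(a,x)·(b,y) := (a·(ω₂(x)·b·ω₂(x)⁻¹)·ω₃(∂x,∂y)⁻¹, x·y)`
on `Aˣ × G₂`. -/
def H2mul {G₁ G₂ A : Type*} [Group G₁] [Group G₂] [Ring A]
    (d : G₂ →* G₁) (ω₂ : G₂ → Aˣ) (ω₃ : G₁ → G₁ → Aˣ) (p q : Aˣ × G₂) : Aˣ × G₂ :=
  (p.1 * (ω₂ p.2 * q.1 * (ω₂ p.2)⁻¹) * (ω₃ (d p.2) (d q.2))⁻¹, p.2 * q.2)

/-- The inverse `(a,x)⁻¹ := (ω₃(∂(x⁻¹),∂x)·(ω₂(x⁻¹)·a⁻¹·ω₂(x⁻¹)⁻¹), x⁻¹)` for the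
twisted product on `Aˣ × G₂`. -/
def H2inv {G₁ G₂ A : Type*} [Group G₁] [Group G₂] [Ring A]
    (d : G₂ →* G₁) (ω₂ : G₂ → Aˣ) (ω₃ : G₁ → G₁ → Aˣ) (p : Aˣ × G₂) : Aˣ × G₂ :=
  (ω₃ (d p.2⁻¹) (d p.2) * (ω₂ p.2⁻¹ * p.1⁻¹ * (ω₂ p.2⁻¹)⁻¹), p.2⁻¹)

/-- For a trivially graded N-weak `𝒢`-algebra, the twisted product
makes `Aˣ × G₂` a group `H₂`, and the projection to `G₂` is a surjective group
homomorphism with kernel `{(a, e)}`. -/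
theorem stmt_6 {G₁ G₂ A : Type*} [Group G₁] [Group G₂] [Ring A]
    (act : G₁ →* MulAut G₂) (d : G₂ →* G₁)
    (hdact : ∀ (g : G₁) (x : G₂), d (act g x) = g * d x * g⁻¹)
    (hPeiffer : ∀ y x : G₂, act (d y) x = y * x * y⁻¹)
    (ω₁ : G₁ → A ≃+* A) (hω₁e : ω₁ 1 = RingEquiv.refl A)
    (ω₂ : G₂ → Aˣ) (hω₂e : ω₂ 1 = 1)
    (ω₃ : G₁ → G₁ → Aˣ)
    (hω₃l : ∀ g : G₁, ω₃ 1 g = 1) (hω₃r : ∀ g : G₁, ω₃ g 1 = 1)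
    (hax1 : ∀ (g₂ g₁ : G₁) (a : A),
      ω₁ (g₂ * g₁) a = (ω₃ g₂ g₁ : A) * ω₁ g₂ (ω₁ g₁ a) * (((ω₃ g₂ g₁)⁻¹ : Aˣ) : A))
    (hax2 : ∀ x₂ x₁ : G₂, ω₂ (x₂ * x₁) = ω₃ (d x₂) (d x₁) * ω₂ x₂ * ω₂ x₁)
    (hax3 : ∀ (x : G₂) (a : A),
      ω₁ (d x) a = (ω₂ x : A) * a * (((ω₂ x)⁻¹ : Aˣ) : A))
    (hax4 : ∀ g₃ g₂ g₁ : G₁,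
      (ω₃ (g₃ * g₂) g₁ : A) * (ω₃ g₃ g₂ : A)
        = (ω₃ g₃ (g₂ * g₁) : A) * ω₁ g₃ ((ω₃ g₂ g₁ : Aˣ) : A))
    (hax5 : ∀ (g : G₁) (x : G₂),
      (ω₂ (act g x) : A)
        = (ω₃ (g * d x) g⁻¹ : A) * (ω₃ g (d x) : A) * ω₁ g ((ω₂ x : Aˣ) : A)
          * (((ω₃ g g⁻¹)⁻¹ : Aˣ) : A)) :
    (∀ p q r : Aˣ × G₂,
      H2mul d ω₂ ω₃ (H2mul d ω₂ ω₃ p q) r = H2mul d ω₂ ω₃ p (H2mul d ω₂ ω₃ q r)) ∧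
    (∀ p : Aˣ × G₂, H2mul d ω₂ ω₃ (1, 1) p = p) ∧
    (∀ p : Aˣ × G₂, H2mul d ω₂ ω₃ p (1, 1) = p) ∧
    (∀ p : Aˣ × G₂, H2mul d ω₂ ω₃ p (H2inv d ω₂ ω₃ p) = (1, 1)) ∧
    (∀ p : Aˣ × G₂, H2mul d ω₂ ω₃ (H2inv d ω₂ ω₃ p) p = (1, 1)) ∧
    (∀ p q : Aˣ × G₂, (H2mul d ω₂ ω₃ p q).2 = p.2 * q.2) ∧
    (∀ x : G₂, ∃ p : Aˣ × G₂, p.2 = x) ∧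
    (∀ p : Aˣ × G₂, p.2 = 1 ↔ ∃ a : Aˣ, p = (a, 1)) := by
  -- inverse relations for ω₂
  have hinv1 : ∀ x : G₂, ω₃ (d x⁻¹) (d x) * ω₂ x⁻¹ * ω₂ x = 1 := by
    intro x
    have := hax2 x⁻¹ x
    rw [inv_mul_cancel, hω₂e] at this
    exact this.symm
  have hinv2 : ∀ x : G₂, ω₃ (d x) (d x⁻¹) * ω₂ x * ω₂ x⁻¹ = 1 := by
    intro x
    have := hax2 x x⁻¹
    rw [mul_inv_cancel, hω₂e] at this
    exact this.symm
  refine ⟨?_, ?_, ?_, ?_, ?_, ?_, ?_, ?_⟩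
  · rintro ⟨a, x⟩ ⟨b, y⟩ ⟨c, z⟩
    have K : ω₃ (d x * d y) (d z) * ω₃ (d x) (d y) * ω₂ x
        = ω₃ (d x) (d y * d z) * ω₂ x * ω₃ (d y) (d z) := by
      apply Units.ext
      have h4 := hax4 (d x) (d y) (d z)
      rw [hax3 x ((ω₃ (d y) (d z) : Aˣ) : A)] at h4
      simp only [Units.val_mul]
      rw [h4]
      simp [mul_assoc]
    have K' : (ω₂ x)⁻¹ * ((ω₃ (d x) (d y))⁻¹ * (ω₃ (d x * d y) (d z))⁻¹)
        = (ω₃ (d y) (d z))⁻¹ * ((ω₂ x)⁻¹ * (ω₃ (d x) (d y * d z))⁻¹) := by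
      have := congrArg (·⁻¹) K
      simpa [mul_inv_rev, mul_assoc] using this
    simp only [H2mul, map_mul, hax2]
    refine Prod.ext ?_ (mul_assoc x y z)
    simp only [mul_inv_rev, mul_assoc, inv_mul_cancel_left]
    rw [K']
  · rintro ⟨a, x⟩
    simp [H2mul, hω₂e, hω₃l]
  · rintro ⟨a, x⟩
    simp [H2mul, hω₂e, hω₃r]
  · rintro ⟨a, x⟩
    refine Prod.ext ?_ (mul_inv_cancel x)
    have h1 : ω₃ (d x⁻¹) (d x) * ω₂ x⁻¹ = (ω₂ x)⁻¹ :=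
      eq_inv_of_mul_eq_one_left (hinv1 x)
    have h2 : (ω₂ x⁻¹)⁻¹ = ω₃ (d x) (d x⁻¹) * ω₂ x :=
      (eq_inv_of_mul_eq_one_left (by simpa [mul_assoc] using hinv2 x)).symm
    simp only [H2mul, H2inv]
    rw [show ω₃ (d x⁻¹) (d x) * (ω₂ x⁻¹ * a⁻¹ * (ω₂ x⁻¹)⁻¹)
          = (ω₂ x)⁻¹ * a⁻¹ * (ω₂ x⁻¹)⁻¹ by
      rw [← mul_assoc, ← mul_assoc, h1], h2]
    simp [mul_assoc]
  · rintro ⟨a, x⟩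
    refine Prod.ext ?_ (inv_mul_cancel x)
    simp only [H2mul, H2inv]
    simp [mul_assoc]
  · intro p q; rfl
  · intro x; exact ⟨(1, x), rfl⟩
  · rintro ⟨a, x⟩
    constructor
    · rintro rfl; exact ⟨a, rfl⟩
    · rintro ⟨b, hb⟩; simpa using congrArg Prod.snd hb
end

section
/- Let 𝒢 = (G₂ →∂ G₁) be a crossed module and (A, ω₁, ω₂, ω₃) a trivially graded N-weak 𝒢-algebra. Equip Aˣ × G₁ with the product (a,g)·(b,h) := (a·ω₁(g)(b)·ω₃(g,h)⁻¹, gh) and Aˣ × G₂ with the product (a,x)·(b,y) := (a·(ω₂(x)·b·ω₂(x)⁻¹)·ω₃(∂x,∂y)⁻¹, xy). Then the map ∂̂ : Aˣ × G₂ → Aˣ × G₁ defined by ∂̂(a, x) := (a, ∂x) is multiplicative: ∂̂((a,x)·(b,y)) = ∂̂(a,x)·∂̂(b,y) for all a, b ∈ Aˣ, x, y ∈ G₂. -/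
/-- The twisted product on `Aˣ × G₁`. -/
def H1mul {G₁ A : Type*} [Group G₁] [Ring A]
    (ω₁ : G₁ → A ≃+* A) (ω₃ : G₁ → G₁ → Aˣ) (p q : Aˣ × G₁) : Aˣ × G₁ :=
  (p.1 * Units.map (ω₁ p.2).toRingHom.toMonoidHom q.1 * (ω₃ p.2 q.2)⁻¹, p.2 * q.2)

/-- For a trivially graded N-weak `𝒢`-algebra, the map
`∂̂(a,x) := (a, ∂x)` from `Aˣ × G₂` to `Aˣ × G₁` is multiplicative
for the twisted products. -/
theorem stmt_7 {G₁ G₂ A : Type*} [Group G₁] [Group G₂] [Ring A]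
    (act : G₁ →* MulAut G₂) (d : G₂ →* G₁)
    (hdact : ∀ (g : G₁) (x : G₂), d (act g x) = g * d x * g⁻¹)
    (hPeiffer : ∀ y x : G₂, act (d y) x = y * x * y⁻¹)
    (ω₁ : G₁ → A ≃+* A) (hω₁e : ω₁ 1 = RingEquiv.refl A)
    (ω₂ : G₂ → Aˣ) (hω₂e : ω₂ 1 = 1)
    (ω₃ : G₁ → G₁ → Aˣ)
    (hω₃l : ∀ g : G₁, ω₃ 1 g = 1) (hω₃r : ∀ g : G₁, ω₃ g 1 = 1)
    (hax1 : ∀ (g₂ g₁ : G₁) (a : A),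
      ω₁ (g₂ * g₁) a = (ω₃ g₂ g₁ : A) * ω₁ g₂ (ω₁ g₁ a) * (((ω₃ g₂ g₁)⁻¹ : Aˣ) : A))
    (hax2 : ∀ x₂ x₁ : G₂, ω₂ (x₂ * x₁) = ω₃ (d x₂) (d x₁) * ω₂ x₂ * ω₂ x₁)
    (hax3 : ∀ (x : G₂) (a : A),
      ω₁ (d x) a = (ω₂ x : A) * a * (((ω₂ x)⁻¹ : Aˣ) : A))
    (hax4 : ∀ g₃ g₂ g₁ : G₁,
      (ω₃ (g₃ * g₂) g₁ : A) * (ω₃ g₃ g₂ : A)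
        = (ω₃ g₃ (g₂ * g₁) : A) * ω₁ g₃ ((ω₃ g₂ g₁ : Aˣ) : A))
    (hax5 : ∀ (g : G₁) (x : G₂),
      (ω₂ (act g x) : A)
        = (ω₃ (g * d x) g⁻¹ : A) * (ω₃ g (d x) : A) * ω₁ g ((ω₂ x : Aˣ) : A)
          * (((ω₃ g g⁻¹)⁻¹ : Aˣ) : A)) :
    ∀ p q : Aˣ × G₂,
      (((H2mul d ω₂ ω₃ p q).1, d (H2mul d ω₂ ω₃ p q).2) : Aˣ × G₁)
        = H1mul ω₁ ω₃ (p.1, d p.2) (q.1, d q.2) := by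
  intro p q
  simp only [H2mul, H1mul, Prod.mk.injEq, map_mul]
  refine ⟨?_, trivial⟩
  congr 1
  congr 1
  ext
  simpa using (hax3 p.2 (q.1 : A)).symm
end

section
/- Let G₁ be a group, A an associative unital ring, ω₁ a map from G₁ to ring automorphisms of A with ω₁(e) = id, and ω₃ : G₁ × G₁ → Aˣ normalized and satisfying ω₁(g₂g₁)(c) = ω₃(g₂,g₁)·ω₁(g₂)(ω₁(g₁)(c))·ω₃(g₂,g₁)⁻¹ for all c ∈ A. Equip Aˣ × G₁ with the product (a,g)·(b,h) := (a·ω₁(g)(b)·ω₃(g,h)⁻¹, gh). Then the map ψ₁ sending (a,g) to the ring automorphism c ↦ a·ω₁(g)(c)·a⁻¹ of A is multiplicative: ψ₁((a,g)·(b,h)) = ψ₁(a,g) ∘ ψ₁(b,h) as maps A → A, for all a, b ∈ Aˣ and g, h ∈ G₁. -/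
/-- The map `ψ₁(a,g) := (c ↦ a·ω₁(g)(c)·a⁻¹)` from `Aˣ × G₁` (with the
twisted product determined by the nonabelian 2-cocycle `ω₃`) to ring automorphisms
of `A` is multiplicative: `ψ₁((a,g)·(b,h)) = ψ₁(a,g) ∘ ψ₁(b,h)` as maps `A → A`. -/
theorem stmt_9 {G₁ A : Type*} [Group G₁] [Ring A]
    (ω₁ : G₁ → A ≃+* A) (hω₁e : ω₁ 1 = RingEquiv.refl A)
    (ω₃ : G₁ → G₁ → Aˣ)
    (hω₃l : ∀ g : G₁, ω₃ 1 g = 1) (hω₃r : ∀ g : G₁, ω₃ g 1 = 1)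
    (hax1 : ∀ (g₂ g₁ : G₁) (c : A),
      ω₁ (g₂ * g₁) c = (ω₃ g₂ g₁ : A) * ω₁ g₂ (ω₁ g₁ c) * (((ω₃ g₂ g₁)⁻¹ : Aˣ) : A)) :
    ∀ (a b : Aˣ) (g h : G₁) (c : A),
      ((H1mul ω₁ ω₃ (a, g) (b, h)).1 : A)
          * ω₁ ((H1mul ω₁ ω₃ (a, g) (b, h)).2) c
          * (((H1mul ω₁ ω₃ (a, g) (b, h)).1⁻¹ : Aˣ) : A)
        = (a : A) * ω₁ g ((b : A) * ω₁ h c * ((b⁻¹ : Aˣ) : A)) * ((a⁻¹ : Aˣ) : A) := by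
  intro a b g h c
  simp only [H1mul, hax1, mul_inv_rev, Units.val_mul, Units.coe_map, map_mul,
    RingEquiv.toRingHom_eq_coe, MonoidHom.coe_coe, RingHom.coe_coe, Units.val_inv_eq_inv_val]
  rw [show ((ω₁ g) ↑b⁻¹ : A) = (Units.map (ω₁ g).toRingHom.toMonoidHom b⁻¹ : A) by simp]
  simp only [map_inv, Units.val_inv_eq_inv_val, Units.coe_map, MonoidHom.coe_coe,
    RingEquiv.toRingHom_eq_coe, RingHom.coe_coe]
  simp only [inv_inv, mul_assoc, Units.inv_mul_cancel_left, Units.mul_inv_cancel_left]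
  rfl
end

section
/- Let 𝒢 = (G₂ →∂ G₁) be a crossed module and (A, ω₁, ω₂, ω₃) a trivially graded N-weak 𝒢-algebra. Equip H₁ := Aˣ × G₁ and H₂ := Aˣ × G₂ with the products (a,g)·(b,h) := (a·ω₁(g)(b)·ω₃(g,h)⁻¹, gh) and (a,x)·(b,y) := (a·(ω₂(x) b ω₂(x)⁻¹)·ω₃(∂x,∂y)⁻¹, xy), and define ^{(a,g)}(b,x) := ( a · ω₁(g)(b) · ω₃(g, ∂x)⁻¹ · ω₁(g·∂x)(ω₃(g⁻¹, g)) · ω₃(g·∂x, g⁻¹)⁻¹ · (ω₂(ᵍx)·a⁻¹·ω₂(ᵍx)⁻¹), ᵍx ). Then: (i) for every (a,g) ∈ H₁ the map ζ ↦ ^{(a,g)}ζ is multiplicative on H₂, i.e. ^{(a,g)}(ζ·ζ') = (^{(a,g)}ζ)·(^{(a,g)}ζ'); (ii) ^{(1,e)}ζ = ζ for all ζ ∈ H₂; and (iii) ^{(a,g)·(b,h)}ζ = ^{(a,g)}(^{(b,h)}ζ) for all (a,g), (b,h) ∈ H₁ and ζ ∈ H₂. Hence H₁ acts on H₂ by group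 automorphisms. -/
/-- The action of `H₁ = Aˣ × G₁` on `H₂ = Aˣ × G₂`:
`^{(a,g)}(b,x) := (a·ω₁(g)(b)·ω₃(g,∂x)⁻¹·ω₁(g∂x)(ω₃(g⁻¹,g))·ω₃(g∂x,g⁻¹)⁻¹·(ω₂(ᵍx)·a⁻¹·ω₂(ᵍx)⁻¹), ᵍx)`. -/
def actH {G₁ G₂ A : Type*} [Group G₁] [Group G₂] [Ring A]
    (act : G₁ →* MulAut G₂) (d : G₂ →* G₁) (ω₁ : G₁ → A ≃+* A)
    (ω₂ : G₂ → Aˣ) (ω₃ : G₁ → G₁ → Aˣ) (p : Aˣ × G₁) (q : Aˣ × G₂) : Aˣ × G₂ :=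
  (p.1 * Units.map (ω₁ p.2).toRingHom.toMonoidHom q.1 * (ω₃ p.2 (d q.2))⁻¹
      * Units.map (ω₁ (p.2 * d q.2)).toRingHom.toMonoidHom (ω₃ p.2⁻¹ p.2)
      * (ω₃ (p.2 * d q.2) p.2⁻¹)⁻¹
      * (ω₂ (act p.2 q.2) * p.1⁻¹ * (ω₂ (act p.2 q.2))⁻¹),
    act p.2 q.2)

/-- Auxiliary: the inverse for the twisted product `H1mul`. -/
def H1inv {G₁ A : Type*} [Group G₁] [Ring A]
    (ω₁ : G₁ → A ≃+* A) (ω₃ : G₁ → G₁ → Aˣ) (p : Aˣ × G₁) : Aˣ × G₁ :=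
  (ω₃ p.2⁻¹ p.2 * Units.map (ω₁ p.2⁻¹).toRingHom.toMonoidHom p.1⁻¹, p.2⁻¹)

/-- For a trivially graded N-weak `𝒢`-algebra, the formula `actH`
defines an action of the group `H₁ = Aˣ × G₁` on the group `H₂ = Aˣ × G₂` by
group automorphisms. -/
theorem stmt_10 {G₁ G₂ A : Type*} [Group G₁] [Group G₂] [Ring A]
    (act : G₁ →* MulAut G₂) (d : G₂ →* G₁)
    (hdact : ∀ (g : G₁) (x : G₂), d (act g x) = g * d x * g⁻¹)
    (hPeiffer : ∀ y x : G₂, act (d y) x = y * x * y⁻¹)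
    (ω₁ : G₁ → A ≃+* A) (hω₁e : ω₁ 1 = RingEquiv.refl A)
    (ω₂ : G₂ → Aˣ) (hω₂e : ω₂ 1 = 1)
    (ω₃ : G₁ → G₁ → Aˣ)
    (hω₃l : ∀ g : G₁, ω₃ 1 g = 1) (hω₃r : ∀ g : G₁, ω₃ g 1 = 1)
    (hax1 : ∀ (g₂ g₁ : G₁) (a : A),
      ω₁ (g₂ * g₁) a = (ω₃ g₂ g₁ : A) * ω₁ g₂ (ω₁ g₁ a) * (((ω₃ g₂ g₁)⁻¹ : Aˣ) : A))
    (hax2 : ∀ x₂ x₁ : G₂, ω₂ (x₂ * x₁) = ω₃ (d x₂) (d x₁) * ω₂ x₂ * ω₂ x₁)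
    (hax3 : ∀ (x : G₂) (a : A),
      ω₁ (d x) a = (ω₂ x : A) * a * (((ω₂ x)⁻¹ : Aˣ) : A))
    (hax4 : ∀ g₃ g₂ g₁ : G₁,
      (ω₃ (g₃ * g₂) g₁ : A) * (ω₃ g₃ g₂ : A)
        = (ω₃ g₃ (g₂ * g₁) : A) * ω₁ g₃ ((ω₃ g₂ g₁ : Aˣ) : A))
    (hax5 : ∀ (g : G₁) (x : G₂),
      (ω₂ (act g x) : A)
        = (ω₃ (g * d x) g⁻¹ : A) * (ω₃ g (d x) : A) * ω₁ g ((ω₂ x : Aˣ) : A)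
          * (((ω₃ g g⁻¹)⁻¹ : Aˣ) : A)) :
    (∀ (p : Aˣ × G₁) (ζ ζ' : Aˣ × G₂),
      actH act d ω₁ ω₂ ω₃ p (H2mul d ω₂ ω₃ ζ ζ')
        = H2mul d ω₂ ω₃ (actH act d ω₁ ω₂ ω₃ p ζ) (actH act d ω₁ ω₂ ω₃ p ζ')) ∧
    (∀ ζ : Aˣ × G₂, actH act d ω₁ ω₂ ω₃ (1, 1) ζ = ζ) ∧
    (∀ (p q : Aˣ × G₁) (ζ : Aˣ × G₂),
      actH act d ω₁ ω₂ ω₃ (H1mul ω₁ ω₃ p q) ζ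
        = actH act d ω₁ ω₂ ω₃ p (actH act d ω₁ ω₂ ω₃ q ζ)) := by
  -- lift the axioms to the unit group `Aˣ`
  have U1 : ∀ (g₂ g₁ : G₁) (u : Aˣ),
      Units.map (ω₁ (g₂ * g₁)).toRingHom.toMonoidHom u
        = ω₃ g₂ g₁ * Units.map (ω₁ g₂).toRingHom.toMonoidHom
            (Units.map (ω₁ g₁).toRingHom.toMonoidHom u) * (ω₃ g₂ g₁)⁻¹ := by
    intro g₂ g₁ u
    refine Units.ext ?_
    rw [Units.val_mul, Units.val_mul]
    exact hax1 g₂ g₁ u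
  have U3 : ∀ (x : G₂) (u : Aˣ),
      Units.map (ω₁ (d x)).toRingHom.toMonoidHom u = ω₂ x * u * (ω₂ x)⁻¹ := by
    intro x u
    refine Units.ext ?_
    rw [Units.val_mul, Units.val_mul]
    exact hax3 x u
  have U4 : ∀ g₃ g₂ g₁ : G₁,
      ω₃ (g₃ * g₂) g₁ * ω₃ g₃ g₂
        = ω₃ g₃ (g₂ * g₁) * Units.map (ω₁ g₃).toRingHom.toMonoidHom (ω₃ g₂ g₁) := by
    intro g₃ g₂ g₁
    refine Units.ext ?_
    rw [Units.val_mul, Units.val_mul]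
    exact hax4 g₃ g₂ g₁
  have hU1one : ∀ u : Aˣ, Units.map (ω₁ (1 : G₁)).toRingHom.toMonoidHom u = u := by
    intro u
    refine Units.ext ?_
    show ω₁ 1 (u : A) = u
    rw [hω₁e]; rfl
  have Fgg : ∀ g : G₁,
      Units.map (ω₁ g).toRingHom.toMonoidHom (ω₃ g⁻¹ g) = ω₃ g g⁻¹ := by
    intro g
    have h := U4 g g⁻¹ g
    rw [mul_inv_cancel, inv_mul_cancel, hω₃l, hω₃r, one_mul, one_mul] at h
    exact h.symm
  -- `H1mul` is a group law
  have Hassoc : ∀ p q r : Aˣ × G₁,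
      H1mul ω₁ ω₃ (H1mul ω₁ ω₃ p q) r = H1mul ω₁ ω₃ p (H1mul ω₁ ω₃ q r) := by
    rintro ⟨a, g⟩ ⟨b, h⟩ ⟨c, k⟩
    simp only [H1mul, Prod.mk.injEq]
    refine ⟨?_, mul_assoc g h k⟩
    have h4 : ω₃ (g * h) k
        = ω₃ g (h * k) * Units.map (ω₁ g).toRingHom.toMonoidHom (ω₃ h k) * (ω₃ g h)⁻¹ := by
      rw [eq_mul_inv_iff_mul_eq]; exact U4 g h k
    rw [U1 g h c, map_mul, map_mul, map_inv, h4]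
    group
  have Hone_l : ∀ p : Aˣ × G₁, H1mul ω₁ ω₃ (1, 1) p = p := by
    rintro ⟨a, g⟩
    simp [H1mul, hU1one, hω₃l]
    exact hU1one a
  have Hone_r : ∀ p : Aˣ × G₁, H1mul ω₁ ω₃ p (1, 1) = p := by
    rintro ⟨a, g⟩
    simp [H1mul, hω₃r]
  have Hmul_inv : ∀ p : Aˣ × G₁, H1mul ω₁ ω₃ p (H1inv ω₁ ω₃ p) = (1, 1) := by
    rintro ⟨a, g⟩
    simp only [H1mul, H1inv, Prod.mk.injEq]
    refine ⟨?_, mul_inv_cancel g⟩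
    rw [map_mul, Fgg]
    have h1 := U1 g g⁻¹ a⁻¹
    rw [mul_inv_cancel, hU1one] at h1
    have h2 := mul_inv_cancel a
    rw [h1] at h2
    rw [← h2]
    group
  have Hinv_mul : ∀ p : Aˣ × G₁, H1mul ω₁ ω₃ (H1inv ω₁ ω₃ p) p = (1, 1) := by
    rintro ⟨a, g⟩
    simp only [H1mul, H1inv, Prod.mk.injEq]
    refine ⟨?_, inv_mul_cancel g⟩
    have h2 : Units.map (ω₁ g⁻¹).toRingHom.toMonoidHom a⁻¹
        * Units.map (ω₁ g⁻¹).toRingHom.toMonoidHom a = (1 : Aˣ) := by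
      rw [← map_mul, inv_mul_cancel, map_one]
    rw [mul_assoc (ω₃ g⁻¹ g), h2, mul_one, mul_inv_cancel]
  have cl1 : ∀ p z : Aˣ × G₁,
      H1mul ω₁ ω₃ (H1inv ω₁ ω₃ p) (H1mul ω₁ ω₃ p z) = z := by
    intro p z
    rw [← Hassoc, Hinv_mul, Hone_l]
  have cl2 : ∀ p z : Aˣ × G₁,
      H1mul ω₁ ω₃ p (H1mul ω₁ ω₃ (H1inv ω₁ ω₃ p) z) = z := by
    intro p z
    rw [← Hassoc, Hmul_inv, Hone_l]
  have invmul : ∀ p q : Aˣ × G₁,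
      H1inv ω₁ ω₃ (H1mul ω₁ ω₃ p q)
        = H1mul ω₁ ω₃ (H1inv ω₁ ω₃ q) (H1inv ω₁ ω₃ p) := by
    intro p q
    have h : H1mul ω₁ ω₃ (H1mul ω₁ ω₃ p q)
        (H1mul ω₁ ω₃ (H1inv ω₁ ω₃ q) (H1inv ω₁ ω₃ p)) = (1, 1) := by
      rw [Hassoc, cl2, Hmul_inv]
    calc H1inv ω₁ ω₃ (H1mul ω₁ ω₃ p q)
        = H1mul ω₁ ω₃ (H1inv ω₁ ω₃ (H1mul ω₁ ω₃ p q))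
            (H1mul ω₁ ω₃ (H1mul ω₁ ω₃ p q)
              (H1mul ω₁ ω₃ (H1inv ω₁ ω₃ q) (H1inv ω₁ ω₃ p))) := by
          rw [h, Hone_r]
      _ = H1mul ω₁ ω₃ (H1inv ω₁ ω₃ q) (H1inv ω₁ ω₃ p) := cl1 _ _
  have conjmul : ∀ p z w : Aˣ × G₁,
      H1mul ω₁ ω₃ (H1mul ω₁ ω₃ p (H1mul ω₁ ω₃ z w)) (H1inv ω₁ ω₃ p)
        = H1mul ω₁ ω₃ (H1mul ω₁ ω₃ (H1mul ω₁ ω₃ p z) (H1inv ω₁ ω₃ p))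
            (H1mul ω₁ ω₃ (H1mul ω₁ ω₃ p w) (H1inv ω₁ ω₃ p)) := by
    intro p z w
    simp only [Hassoc, cl1]
  -- the key fact: the action is conjugation inside `H₁`
  have key : ∀ (p : Aˣ × G₁) (ζ : Aˣ × G₂),
      actH act d ω₁ ω₂ ω₃ p ζ
        = ((H1mul ω₁ ω₃ (H1mul ω₁ ω₃ p (ζ.1, d ζ.2)) (H1inv ω₁ ω₃ p)).1,
            act p.2 ζ.2) := by
    rintro ⟨a, g⟩ ⟨b, x⟩
    simp only [actH, H1mul, H1inv, Prod.mk.injEq]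
    refine ⟨?_, trivial⟩
    have h5 : ω₂ (act g x) * a⁻¹ * (ω₂ (act g x))⁻¹
        = ω₃ (g * d x) g⁻¹
          * Units.map (ω₁ (g * d x)).toRingHom.toMonoidHom
              (Units.map (ω₁ g⁻¹).toRingHom.toMonoidHom a⁻¹)
          * (ω₃ (g * d x) g⁻¹)⁻¹ := by
      rw [← U3 (act g x) a⁻¹, hdact, U1]
    rw [map_mul, h5]
    group
  have emb : ∀ ζ ζ' : Aˣ × G₂,
      (((H2mul d ω₂ ω₃ ζ ζ').1 : Aˣ), d (H2mul d ω₂ ω₃ ζ ζ').2)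
        = H1mul ω₁ ω₃ (ζ.1, d ζ.2) (ζ'.1, d ζ'.2) := by
    rintro ⟨b, x⟩ ⟨c, y⟩
    simp only [H2mul, H1mul, Prod.mk.injEq, map_mul]
    refine ⟨?_, trivial⟩
    rw [U3]
  refine ⟨?_, ?_, ?_⟩
  · -- multiplicativity
    intro p ζ ζ'
    rw [key p (H2mul d ω₂ ω₃ ζ ζ'), key p ζ, key p ζ', emb ζ ζ',
      conjmul p (ζ.1, d ζ.2) (ζ'.1, d ζ'.2)]
    simp only [H2mul, H1mul, H1inv, Prod.mk.injEq]
    constructor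
    · rw [← U3, hdact, hdact]
    · exact map_mul (act p.2) ζ.2 ζ'.2
  · -- identity acts trivially
    intro ζ
    have h1 : act (1 : G₁) = 1 := map_one act
    simp [actH, hU1one, hω₃l, hω₃r, h1]
    exact Prod.ext (hU1one ζ.1) rfl
  · -- compatibility with the product of `H₁`
    intro p q ζ
    rw [key (H1mul ω₁ ω₃ p q) ζ, key q ζ,
      key p ((H1mul ω₁ ω₃ (H1mul ω₁ ω₃ q (ζ.1, d ζ.2)) (H1inv ω₁ ω₃ q)).1, act q.2 ζ.2)]
    have hD2 : d (act q.2 ζ.2)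
        = (H1mul ω₁ ω₃ (H1mul ω₁ ω₃ q (ζ.1, d ζ.2)) (H1inv ω₁ ω₃ q)).2 := by
      simp [H1mul, H1inv, hdact]
    have hfst : H1mul ω₁ ω₃ (H1mul ω₁ ω₃ (H1mul ω₁ ω₃ p q) (ζ.1, d ζ.2))
          (H1inv ω₁ ω₃ (H1mul ω₁ ω₃ p q))
        = H1mul ω₁ ω₃
            (H1mul ω₁ ω₃ p
              (H1mul ω₁ ω₃ (H1mul ω₁ ω₃ q (ζ.1, d ζ.2)) (H1inv ω₁ ω₃ q)))
            (H1inv ω₁ ω₃ p) := by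
      rw [invmul]
      simp only [Hassoc]
    have hsnd : act ((H1mul ω₁ ω₃ p q).2) ζ.2 = act p.2 (act q.2 ζ.2) := by
      have h : (H1mul ω₁ ω₃ p q).2 = p.2 * q.2 := rfl
      rw [h, map_mul]
      rfl
    simp only [Prod.fst, Prod.snd]
    rw [hD2, Prod.mk.eta, hfst, hsnd]
end

section
/- Let G₁ be a group, A an associative unital ring, ω₁ a map from G₁ to ring automorphisms of A with ω₁(e) = id, and ω₃ : G₁ × G₁ → Aˣ normalized and satisfying ω₁(g₂g₁)(a) = ω₃(g₂,g₁)·ω₁(g₂)(ω₁(g₁)(a))·ω₃(g₂,g₁)⁻¹ together with the 2-cocycle condition ω₃(g₃g₂,g₁)·ω₃(g₃,g₂) = ω₃(g₃,g₂g₁)·ω₁(g₃)(ω₃(g₂,g₁)). Suppose Λ : G₁ → Aˣ satisfies Λ(e) = 1 and ω₁(g)(a) = Λ(g)·a·Λ(g)⁻¹ for all g ∈ G₁ and a ∈ A, and suppose μ : G₁ × G₁ → Aˣ takes values in units that commute with every element of A and satisfies Λ(g₂g₁) = μ(g₂,g₁)·ω₃(g₂,g₁)·Λ(g₂)·Λ(g₁)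 for all g₁, g₂ ∈ G₁. Then μ is a 2-cocycle: μ(g₃g₂, g₁)·μ(g₃, g₂) = μ(g₃, g₂g₁)·ω₁(g₃)(μ(g₂,g₁)) for all g₁, g₂, g₃ ∈ G₁. -/
/-- If `Λ : G₁ → Aˣ` lifts the projective action `ω₁` (i.e. `ω₁(g)` is
conjugation by `Λ(g)`) and `μ : G₁ × G₁ → Aˣ` is the central-unit-valued discrepancy
`Λ(g₂g₁) = μ(g₂,g₁)·ω₃(g₂,g₁)·Λ(g₂)·Λ(g₁)`, then `μ` is a 2-cocycle:
`μ(g₃g₂,g₁)·μ(g₃,g₂) = μ(g₃,g₂g₁)·ω₁(g₃)(μ(g₂,g₁))`. -/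
theorem stmt_12 {G₁ A : Type*} [Group G₁] [Ring A]
    (ω₁ : G₁ → A ≃+* A) (hω₁e : ω₁ 1 = RingEquiv.refl A)
    (ω₃ : G₁ → G₁ → Aˣ)
    (hω₃l : ∀ g : G₁, ω₃ 1 g = 1) (hω₃r : ∀ g : G₁, ω₃ g 1 = 1)
    (hax1 : ∀ (g₂ g₁ : G₁) (a : A),
      ω₁ (g₂ * g₁) a = (ω₃ g₂ g₁ : A) * ω₁ g₂ (ω₁ g₁ a) * (((ω₃ g₂ g₁)⁻¹ : Aˣ) : A))
    (hax4 : ∀ g₃ g₂ g₁ : G₁,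
      (ω₃ (g₃ * g₂) g₁ : A) * (ω₃ g₃ g₂ : A)
        = (ω₃ g₃ (g₂ * g₁) : A) * ω₁ g₃ ((ω₃ g₂ g₁ : Aˣ) : A))
    (Λ : G₁ → Aˣ) (hΛe : Λ 1 = 1)
    (hΛ : ∀ (g : G₁) (a : A), ω₁ g a = (Λ g : A) * a * (((Λ g)⁻¹ : Aˣ) : A))
    (μ : G₁ → G₁ → Aˣ)
    (hcentral : ∀ (g₂ g₁ : G₁) (a : A), (μ g₂ g₁ : A) * a = a * (μ g₂ g₁ : A))
    (hμ : ∀ g₂ g₁ : G₁, Λ (g₂ * g₁) = μ g₂ g₁ * ω₃ g₂ g₁ * Λ g₂ * Λ g₁) :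
    ∀ g₃ g₂ g₁ : G₁,
      (μ (g₃ * g₂) g₁ : A) * (μ g₃ g₂ : A)
        = (μ g₃ (g₂ * g₁) : A) * ω₁ g₃ ((μ g₂ g₁ : Aˣ) : A) := by

  intro g₃ g₂ g₁
  have hc : ∀ (a b : G₁) (u : Aˣ), μ a b * u = u * μ a b :=
    fun a b u => Units.ext (hcentral a b u)
  have hωμ : ω₁ g₃ ((μ g₂ g₁ : Aˣ) : A) = (μ g₂ g₁ : A) := by
    rw [hΛ, ← hcentral g₂ g₁ ((Λ g₃ : Aˣ) : A), mul_assoc]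
    simp
  rw [hωμ]
  have hax4' : ω₃ (g₃ * g₂) g₁ * ω₃ g₃ g₂
      = ω₃ g₃ (g₂ * g₁) * (Λ g₃ * ω₃ g₂ g₁ * (Λ g₃)⁻¹) := by
    apply Units.ext
    simpa [Units.val_mul, hΛ, mul_assoc] using hax4 g₃ g₂ g₁
  have h1 : μ (g₃*g₂) g₁ * ω₃ (g₃*g₂) g₁ * (μ g₃ g₂ * ω₃ g₃ g₂ * Λ g₃ * Λ g₂) * Λ g₁
      = μ g₃ (g₂*g₁) * ω₃ g₃ (g₂*g₁) * Λ g₃ * (μ g₂ g₁ * ω₃ g₂ g₁ * Λ g₂ * Λ g₁) := by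
    rw [← hμ, ← hμ, ← hμ, ← hμ, mul_assoc]
  have h2 : μ (g₃ * g₂) g₁ * μ g₃ g₂ * (ω₃ (g₃*g₂) g₁ * (ω₃ g₃ g₂ * (Λ g₃ * (Λ g₂ * Λ g₁))))
      = μ g₃ (g₂*g₁) * μ g₂ g₁ * (ω₃ (g₃*g₂) g₁ * (ω₃ g₃ g₂ * (Λ g₃ * (Λ g₂ * Λ g₁)))) := by
    calc μ (g₃ * g₂) g₁ * μ g₃ g₂ * (ω₃ (g₃*g₂) g₁ * (ω₃ g₃ g₂ * (Λ g₃ * (Λ g₂ * Λ g₁))))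
        = μ (g₃*g₂) g₁ * ω₃ (g₃*g₂) g₁ * (μ g₃ g₂ * ω₃ g₃ g₂ * Λ g₃ * Λ g₂) * Λ g₁ := by
          simp only [mul_assoc]
          rw [← mul_assoc (ω₃ (g₃*g₂) g₁) (μ g₃ g₂), ← hc, mul_assoc]
      _ = μ g₃ (g₂*g₁) * ω₃ g₃ (g₂*g₁) * Λ g₃ * (μ g₂ g₁ * ω₃ g₂ g₁ * Λ g₂ * Λ g₁) := h1
      _ = μ g₃ (g₂*g₁) * μ g₂ g₁ * (ω₃ g₃ (g₂*g₁) * (Λ g₃ * (ω₃ g₂ g₁ * (Λ g₂ * Λ g₁)))) := by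
          simp only [mul_assoc]
          rw [← mul_assoc (Λ g₃) (μ g₂ g₁), ← hc, mul_assoc]
          rw [← mul_assoc (ω₃ g₃ (g₂*g₁)) (μ g₂ g₁), ← hc, mul_assoc]
      _ = μ g₃ (g₂*g₁) * μ g₂ g₁ * (ω₃ (g₃*g₂) g₁ * (ω₃ g₃ g₂ * (Λ g₃ * (Λ g₂ * Λ g₁)))) := by
          rw [← mul_assoc (ω₃ (g₃*g₂) g₁) (ω₃ g₃ g₂), hax4']
          simp [mul_assoc]
  have key : μ (g₃ * g₂) g₁ * μ g₃ g₂ = μ g₃ (g₂ * g₁) * μ g₂ g₁ :=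
    mul_right_cancel h2
  rw [← Units.val_mul, ← Units.val_mul, key]
end

section
/- Let G₁ be a group, A an associative unital ring, ω₁ a map from G₁ to ring automorphisms of A, and ω₃ : G₁ × G₁ → Aˣ. Suppose Λ, Λ' : G₁ → Aˣ both satisfy ω₁(g)(a) = Λ(g)·a·Λ(g)⁻¹ = Λ'(g)·a·Λ'(g)⁻¹ for all g, a, and that μ, μ' : G₁ × G₁ → Aˣ satisfy Λ(g₂g₁) = μ(g₂,g₁)·ω₃(g₂,g₁)·Λ(g₂)·Λ(g₁) and Λ'(g₂g₁) = μ'(g₂,g₁)·ω₃(g₂,g₁)·Λ'(g₂)·Λ'(g₁), where the values of μ and μ' commute with every element of A. Set c(g) := Λ'(g)·Λ(g)⁻¹. Then each c(g) commutes with every element of A, and μ'(g₂,g₁) = μ(g₂,g₁) · c(g₂g₁) · c(g₂)⁻¹ · ω₁(g₂)(c(g₁))⁻¹ for all g₁, g₂ ∈ G₁; that is, μ and μ' differ by the coboundary of c, so they are cohomologous. -/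
/-- Two lifts `Λ, Λ'` of the same projective action `ω₁` lead to
cohomologous central 2-cocycles `μ, μ'`: with `c(g) := Λ'(g)·Λ(g)⁻¹`, each `c(g)`
is central and `μ'(g₂,g₁) = μ(g₂,g₁)·c(g₂g₁)·c(g₂)⁻¹·ω₁(g₂)(c(g₁))⁻¹`. -/
theorem stmt_13 {G₁ A : Type*} [Group G₁] [Ring A]
    (ω₁ : G₁ → A ≃+* A) (ω₃ : G₁ → G₁ → Aˣ)
    (Λ Λ' : G₁ → Aˣ)
    (hΛ : ∀ (g : G₁) (a : A), ω₁ g a = (Λ g : A) * a * (((Λ g)⁻¹ : Aˣ) : A))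
    (hΛ' : ∀ (g : G₁) (a : A), ω₁ g a = (Λ' g : A) * a * (((Λ' g)⁻¹ : Aˣ) : A))
    (μ μ' : G₁ → G₁ → Aˣ)
    (hcentral : ∀ (g₂ g₁ : G₁) (a : A), (μ g₂ g₁ : A) * a = a * (μ g₂ g₁ : A))
    (hcentral' : ∀ (g₂ g₁ : G₁) (a : A), (μ' g₂ g₁ : A) * a = a * (μ' g₂ g₁ : A))
    (hμ : ∀ g₂ g₁ : G₁, Λ (g₂ * g₁) = μ g₂ g₁ * ω₃ g₂ g₁ * Λ g₂ * Λ g₁)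
    (hμ' : ∀ g₂ g₁ : G₁, Λ' (g₂ * g₁) = μ' g₂ g₁ * ω₃ g₂ g₁ * Λ' g₂ * Λ' g₁) :
    (∀ (g : G₁) (a : A), ((Λ' g * (Λ g)⁻¹ : Aˣ) : A) * a = a * ((Λ' g * (Λ g)⁻¹ : Aˣ) : A)) ∧
    ∀ g₂ g₁ : G₁,
      μ' g₂ g₁ = μ g₂ g₁ * (Λ' (g₂ * g₁) * (Λ (g₂ * g₁))⁻¹)
        * (Λ' g₂ * (Λ g₂)⁻¹)⁻¹
        * (Units.map (ω₁ g₂).toRingHom.toMonoidHom (Λ' g₁ * (Λ g₁)⁻¹))⁻¹ := by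
  -- `c g := Λ' g * (Λ g)⁻¹` is central in `A`
  have hc : ∀ (g : G₁) (a : A),
      ((Λ' g * (Λ g)⁻¹ : Aˣ) : A) * a = a * ((Λ' g * (Λ g)⁻¹ : Aˣ) : A) := by
    intro g a
    have h := ((hΛ' g (((Λ g)⁻¹ : Aˣ) * a * (Λ g : A))).symm.trans
      (hΛ g (((Λ g)⁻¹ : Aˣ) * a * (Λ g : A))))
    -- h : Λ' g * (Λ g⁻¹ * a * Λ g) * Λ' g⁻¹ = Λ g * (Λ g⁻¹ * a * Λ g) * Λ g⁻¹
    have h2 : (Λ' g : A) * (((Λ g)⁻¹ : Aˣ) : A) * a * (Λ g : A) * (((Λ' g)⁻¹ : Aˣ) : A) = a := by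
      calc (Λ' g : A) * (((Λ g)⁻¹ : Aˣ) : A) * a * (Λ g : A) * (((Λ' g)⁻¹ : Aˣ) : A)
          = (Λ' g : A) * ((((Λ g)⁻¹ : Aˣ) : A) * a * (Λ g : A)) * (((Λ' g)⁻¹ : Aˣ) : A) := by
            simp only [mul_assoc]
        _ = (Λ g : A) * ((((Λ g)⁻¹ : Aˣ) : A) * a * (Λ g : A)) * (((Λ g)⁻¹ : Aˣ) : A) := h
        _ = a := by
            simp only [mul_assoc, Units.mul_inv_cancel_left, Units.inv_mul_cancel_left,
              Units.mul_inv_cancel_right, Units.inv_mul_cancel_right, Units.mul_inv, Units.inv_mul, mul_one, one_mul]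
    conv_rhs => rw [← h2]
    push_cast
    simp only [mul_assoc, Units.mul_inv_cancel_left, Units.inv_mul_cancel_left,
      Units.mul_inv_cancel_right, Units.inv_mul_cancel_right, Units.mul_inv, Units.inv_mul, mul_one, one_mul]
  refine ⟨hc, ?_⟩
  intro g₂ g₁
  -- commutation in `Aˣ`
  have hcomm : ∀ (g : G₁) (y : Aˣ), Commute (Λ' g * (Λ g)⁻¹) y := by
    intro g y
    exact Units.ext (by exact_mod_cast hc g (y : A))
  -- the image of the central unit `c g₁` under `ω₁ g₂` is `c g₁` itself
  have hu : Units.map (ω₁ g₂).toRingHom.toMonoidHom (Λ' g₁ * (Λ g₁)⁻¹)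
      = Λ' g₁ * (Λ g₁)⁻¹ := by
    apply Units.ext
    have h1 : ((Units.map (ω₁ g₂).toRingHom.toMonoidHom (Λ' g₁ * (Λ g₁)⁻¹) : Aˣ) : A)
        = ω₁ g₂ ((Λ' g₁ * (Λ g₁)⁻¹ : Aˣ) : A) := rfl
    rw [h1, hΛ g₂ ((Λ' g₁ * (Λ g₁)⁻¹ : Aˣ) : A), ← hc g₁ (Λ g₂ : A), mul_assoc]
    simp
  rw [hu]
  set c : G₁ → Aˣ := fun g => Λ' g * (Λ g)⁻¹ with hcdef
  -- cancel on the right by `ω₃ g₂ g₁ * Λ' g₂ * Λ' g₁`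
  rw [← mul_left_inj (ω₃ g₂ g₁ * Λ' g₂ * Λ' g₁)]
  have hl : μ' g₂ g₁ * (ω₃ g₂ g₁ * Λ' g₂ * Λ' g₁) = Λ' (g₂ * g₁) := by
    rw [hμ' g₂ g₁]; group
  rw [hl]
  have hcΛ : ∀ g : G₁, (c g)⁻¹ * Λ' g = Λ g := by
    intro g; simp [hcdef, mul_assoc]
  calc Λ' (g₂ * g₁)
      = c (g₂ * g₁) * Λ (g₂ * g₁) := by simp [hcdef, mul_assoc]
    _ = c (g₂ * g₁) * (μ g₂ g₁ * ω₃ g₂ g₁ * Λ g₂ * Λ g₁) := by rw [hμ g₂ g₁]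
    _ = μ g₂ g₁ * c (g₂ * g₁) * ω₃ g₂ g₁ * Λ g₂ * Λ g₁ := by
        rw [← mul_assoc, ← mul_assoc, ← mul_assoc, (hcomm (g₂ * g₁) (μ g₂ g₁)).eq]
    _ = μ g₂ g₁ * c (g₂ * g₁) * ω₃ g₂ g₁ * ((c g₂)⁻¹ * Λ' g₂) * ((c g₁)⁻¹ * Λ' g₁) := by
        rw [hcΛ, hcΛ]
    _ = μ g₂ g₁ * c (g₂ * g₁) * (c g₂)⁻¹ * (c g₁)⁻¹ * (ω₃ g₂ g₁ * Λ' g₂ * Λ' g₁) := by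
        have h1 := ((hcomm g₂ (ω₃ g₂ g₁)).inv_left).eq
        have h2 := ((hcomm g₁ (ω₃ g₂ g₁)).inv_left).eq
        have h3 := ((hcomm g₁ (Λ' g₂)).inv_left).eq
        calc μ g₂ g₁ * c (g₂ * g₁) * ω₃ g₂ g₁ * ((c g₂)⁻¹ * Λ' g₂) * ((c g₁)⁻¹ * Λ' g₁)
            = μ g₂ g₁ * c (g₂ * g₁) * (ω₃ g₂ g₁ * (c g₂)⁻¹) * (Λ' g₂ * (c g₁)⁻¹) * Λ' g₁ := by
              simp only [mul_assoc]
          _ = μ g₂ g₁ * c (g₂ * g₁) * ((c g₂)⁻¹ * ω₃ g₂ g₁) * ((c g₁)⁻¹ * Λ' g₂) * Λ' g₁ := by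
              rw [← h1, ← h3]
          _ = μ g₂ g₁ * c (g₂ * g₁) * (c g₂)⁻¹ * (ω₃ g₂ g₁ * (c g₁)⁻¹) * (Λ' g₂ * Λ' g₁) := by
              simp only [mul_assoc]
          _ = μ g₂ g₁ * c (g₂ * g₁) * (c g₂)⁻¹ * ((c g₁)⁻¹ * ω₃ g₂ g₁) * (Λ' g₂ * Λ' g₁) := by
              rw [← h2]
          _ = μ g₂ g₁ * c (g₂ * g₁) * (c g₂)⁻¹ * (c g₁)⁻¹ * (ω₃ g₂ g₁ * Λ' g₂ * Λ' g₁) := by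
              simp only [mul_assoc]
end

section
/- Let 𝒢 = (G₂ →∂ G₁) be a crossed module, A an associative unital ring, ω₁ a map from G₁ to ring automorphisms of A, ω₂ : G₂ → Aˣ, and ω₃ : G₁ × G₁ → Aˣ, satisfying ω₂(x₂x₁) = ω₃(∂x₂, ∂x₁)·ω₂(x₂)·ω₂(x₁) and ω₁(∂x)(a) = ω₂(x)·a·ω₂(x)⁻¹ for all a ∈ A. Suppose Λ : G₁ → Aˣ satisfies ω₁(g)(a) = Λ(g)·a·Λ(g)⁻¹ for all g and a, and μ : G₁ × G₁ → Aˣ takes values commuting with every element of A and satisfies Λ(g₂g₁) = μ(g₂,g₁)·ω₃(g₂,g₁)·Λ(g₂)·Λ(g₁). Define γ(x) := ω₂(x)·Λ(∂x)⁻¹ for x ∈ G₂. Then each γ(x) commutes with every element of A, and γ(x₂·x₁) = μ(∂x₂, ∂x₁)⁻¹ · γ(x₂) · γ(x₁) for all x₁, x₂ ∈ G₂. -/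
/-- With `Λ` a lift of `ω₁` and `μ` the associated central
2-cocycle, the function `γ(x) := ω₂(x)·Λ(∂x)⁻¹` takes central values and satisfies
`γ(x₂x₁) = μ(∂x₂,∂x₁)⁻¹·γ(x₂)·γ(x₁)`. -/
theorem stmt_14 {G₁ G₂ A : Type*} [Group G₁] [Group G₂] [Ring A]
    (act : G₁ →* MulAut G₂) (d : G₂ →* G₁)
    (hdact : ∀ (g : G₁) (x : G₂), d (act g x) = g * d x * g⁻¹)
    (hPeiffer : ∀ y x : G₂, act (d y) x = y * x * y⁻¹)
    (ω₁ : G₁ → A ≃+* A) (ω₂ : G₂ → Aˣ) (ω₃ : G₁ → G₁ → Aˣ)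
    (hax2 : ∀ x₂ x₁ : G₂, ω₂ (x₂ * x₁) = ω₃ (d x₂) (d x₁) * ω₂ x₂ * ω₂ x₁)
    (hax3 : ∀ (x : G₂) (a : A),
      ω₁ (d x) a = (ω₂ x : A) * a * (((ω₂ x)⁻¹ : Aˣ) : A))
    (Λ : G₁ → Aˣ)
    (hΛ : ∀ (g : G₁) (a : A), ω₁ g a = (Λ g : A) * a * (((Λ g)⁻¹ : Aˣ) : A))
    (μ : G₁ → G₁ → Aˣ)
    (hcentral : ∀ (g₂ g₁ : G₁) (a : A), (μ g₂ g₁ : A) * a = a * (μ g₂ g₁ : A))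
    (hμ : ∀ g₂ g₁ : G₁, Λ (g₂ * g₁) = μ g₂ g₁ * ω₃ g₂ g₁ * Λ g₂ * Λ g₁) :
    (∀ (x : G₂) (a : A),
      ((ω₂ x * (Λ (d x))⁻¹ : Aˣ) : A) * a = a * ((ω₂ x * (Λ (d x))⁻¹ : Aˣ) : A)) ∧
    ∀ x₂ x₁ : G₂,
      ω₂ (x₂ * x₁) * (Λ (d (x₂ * x₁)))⁻¹
        = (μ (d x₂) (d x₁))⁻¹ * (ω₂ x₂ * (Λ (d x₂))⁻¹) * (ω₂ x₁ * (Λ (d x₁))⁻¹) := by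
  -- centrality of γ
  have hcent : ∀ (x : G₂) (a : A),
      ((ω₂ x * (Λ (d x))⁻¹ : Aˣ) : A) * a = a * ((ω₂ x * (Λ (d x))⁻¹ : Aˣ) : A) := by
    intro x a
    set u : A := (ω₂ x : A) with hu
    set u' : A := (((ω₂ x)⁻¹ : Aˣ) : A) with hu'
    set v : A := (Λ (d x) : A) with hv
    set v' : A := (((Λ (d x))⁻¹ : Aˣ) : A) with hv'
    have huu' : u * u' = 1 := Units.mul_inv _
    have hu'u : u' * u = 1 := Units.inv_mul _
    have hvv' : v * v' = 1 := Units.mul_inv _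
    have hv'v : v' * v = 1 := Units.inv_mul _
    have h : ∀ b : A, u * b * u' = v * b * v' :=
      fun b => (hax3 x b).symm.trans (hΛ (d x) b)
    have key : u * (v' * a * v) * u' = a := by
      rw [h (v' * a * v)]
      calc v * (v' * a * v) * v' = (v * v') * a * (v * v') := by simp only [mul_assoc]
        _ = a := by rw [hvv', one_mul, mul_one]
    have key2 : u * v' * a = a * (u * v') := by
      have e1 : u * v' * a * v = a * u := by
        have := congrArg (fun t => t * u) key
        simpa [mul_assoc, hu'u] using this
      have := congrArg (fun t => t * v') e1
      simpa [mul_assoc, hvv'] using this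
    simpa [Units.val_mul, mul_assoc] using key2
  refine ⟨hcent, ?_⟩
  intro x₂ x₁
  -- work in Aˣ
  set c₂ : Aˣ := ω₂ x₂ * (Λ (d x₂))⁻¹ with hc₂
  set c₁ : Aˣ := ω₂ x₁ * (Λ (d x₁))⁻¹ with hc₁
  set m : Aˣ := μ (d x₂) (d x₁) with hm
  have hc₂c : ∀ w : Aˣ, c₂ * w = w * c₂ := fun w => Units.ext (hcent x₂ w)
  have hc₁c : ∀ w : Aˣ, c₁ * w = w * c₁ := fun w => Units.ext (hcent x₁ w)
  have hmc : ∀ w : Aˣ, m * w = w * m := fun w => Units.ext (hcentral _ _ w)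
  have hω₂2 : ω₂ x₂ = c₂ * Λ (d x₂) := by rw [hc₂]; group
  have hω₂1 : ω₂ x₁ = c₁ * Λ (d x₁) := by rw [hc₁]; group
  have hd : d (x₂ * x₁) = d x₂ * d x₁ := map_mul d _ _
  rw [hax2, hd, hμ, ← hm]
  rw [hω₂2, hω₂1]
  -- goal: ω₃ * (c₂ * Λ₂) * (c₁ * Λ₁) * (m * ω₃ * Λ₂ * Λ₁)⁻¹ = m⁻¹ * c₂ * c₁
  set t := ω₃ (d x₂) (d x₁) with ht
  set l₂ := Λ (d x₂) with hl₂
  set l₁ := Λ (d x₁) with hl₁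
  have step : t * (c₂ * l₂) * (c₁ * l₁) = c₂ * c₁ * (t * l₂ * l₁) := by
    calc t * (c₂ * l₂) * (c₁ * l₁) = (t * c₂) * (l₂ * c₁) * l₁ := by group
      _ = (c₂ * t) * (c₁ * l₂) * l₁ := by rw [← hc₂c t, ← hc₁c l₂]
      _ = c₂ * (t * c₁) * l₂ * l₁ := by group
      _ = c₂ * (c₁ * t) * l₂ * l₁ := by rw [← hc₁c t]
      _ = c₂ * c₁ * (t * l₂ * l₁) := by group
  rw [step]
  calc c₂ * c₁ * (t * l₂ * l₁) * (m * t * l₂ * l₁)⁻¹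
      = c₂ * c₁ * ((t * l₂ * l₁) * (t * l₂ * l₁)⁻¹) * m⁻¹ := by group
    _ = c₂ * c₁ * m⁻¹ := by rw [mul_inv_cancel]; group
    _ = m⁻¹ * c₂ * c₁ := by
        rw [mul_assoc, hc₁c m⁻¹, ← mul_assoc, hc₂c m⁻¹]
end

section
/- Let 𝒢 = (G₂ →∂ G₁) be a crossed module, let H₁ ≤ G₁ be a subgroup containing the image of ∂, and let (A, ω₁, ω₂) be a strict (G₂ →∂ H₁)-algebra: ω₁ : H₁ → RingAut(A) and ω₂ : G₂ → Aˣ are group homomorphisms with ω₁(∂x)(a) = ω₂(x)·a·ω₂(x)⁻¹ for all a ∈ A and ω₂(ʰx) = ω₁(h)(ω₂(x)) for all h ∈ H₁, x ∈ G₂. Define C := { f : G₁ → A | f(g·h) = ω₁(h)⁻¹(f(g)) for all g ∈ G₁, h ∈ H₁ }. Then: (a) C is a subring of the ring of all functions G₁ → A with pointwise operations; (b) for each g₀ ∈ G₁ the map Ω(g₀) : f ↦ (g ↦ f(g₀⁻¹·g)) sends C to C, is a ring automorphism of C, and Ω : G₁ → RingAut(C) is a group homomorphism; (c) for each x ∈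 G₂ the function W(x) : g ↦ ω₂(^{g⁻¹}x) belongs to C, is a unit of C, and W : G₂ → Cˣ is a group homomorphism; (d) Ω(∂x)(f) = W(x)·f·W(x)⁻¹ for all x ∈ G₂ and f ∈ C; (e) Ω(g)(W(x)) = W(ᵍx) for all g ∈ G₁ and x ∈ G₂. Hence (C, Ω, W) is a strict 𝒢-algebra. -/
section Aux

variable {G₁ G₂ A : Type*} [Group G₁] [Group G₂] [Ring A]

/-- The subring of ω₁-equivariant functions. -/
def stmt15C (H₁ : Subgroup G₁) (ω₁ : H₁ →* RingAut A) : Subring (G₁ → A) where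
  carrier := {f | ∀ (g : G₁) (h : H₁), f (g * (h : G₁)) = (ω₁ h)⁻¹ (f g)}
  mul_mem' := by
    intro f f' hf hf' g h
    simp only [Pi.mul_apply, hf g h, hf' g h, map_mul]
  one_mem' := by intro g h; simp
  add_mem' := by
    intro f f' hf hf' g h
    simp only [Pi.add_apply, hf g h, hf' g h, map_add]
  zero_mem' := by intro g h; simp
  neg_mem' := by
    intro f hf g h
    simp only [Pi.neg_apply, hf g h, map_neg]

theorem stmt15_trans_mem (H₁ : Subgroup G₁) (ω₁ : H₁ →* RingAut A)
    (g₀ : G₁) (f : G₁ → A) (hf : f ∈ stmt15C H₁ ω₁) :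
    (fun g => f (g₀⁻¹ * g)) ∈ stmt15C H₁ ω₁ := by
  intro g h
  have h1 : g₀⁻¹ * (g * (h : G₁)) = (g₀⁻¹ * g) * (h : G₁) := by group
  show f (g₀⁻¹ * (g * (h : G₁))) = (ω₁ h)⁻¹ (f (g₀⁻¹ * g))
  rw [h1, hf (g₀⁻¹ * g) h]

/-- Translation automorphism of C. -/
def stmt15Omega1 (H₁ : Subgroup G₁) (ω₁ : H₁ →* RingAut A) (g₀ : G₁) :
    RingAut (stmt15C H₁ ω₁ : Subring (G₁ → A)) where
  toFun f := ⟨fun g => (f : G₁ → A) (g₀⁻¹ * g), stmt15_trans_mem H₁ ω₁ g₀ f f.2⟩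
  invFun f := ⟨fun g => (f : G₁ → A) (g₀ * g), by
    have := stmt15_trans_mem H₁ ω₁ g₀⁻¹ f f.2
    simpa using this⟩
  left_inv f := by ext g; simp
  right_inv f := by ext g; simp
  map_mul' f f' := by ext g; simp
  map_add' f f' := by ext g; simp

/-- Ω as a group homomorphism. -/
def stmt15Omega (H₁ : Subgroup G₁) (ω₁ : H₁ →* RingAut A) :
    G₁ →* RingAut (stmt15C H₁ ω₁ : Subring (G₁ → A)) where
  toFun := stmt15Omega1 H₁ ω₁
  map_one' := by
    refine RingEquiv.ext fun f => Subtype.ext (funext fun g => ?_)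
    show (f : G₁ → A) ((1 : G₁)⁻¹ * g) = (f : G₁ → A) g
    rw [inv_one, one_mul]
  map_mul' a b := by
    refine RingEquiv.ext fun f => Subtype.ext (funext fun g => ?_)
    show (f : G₁ → A) ((a * b)⁻¹ * g) = (f : G₁ → A) (b⁻¹ * (a⁻¹ * g))
    rw [mul_inv_rev, mul_assoc]

theorem stmt15_W_mem (act : G₁ →* MulAut G₂) (H₁ : Subgroup G₁)
    (ω₁ : H₁ →* RingAut A) (ω₂ : G₂ →* Aˣ)
    (hax5 : ∀ (h : H₁) (x : G₂), ((ω₂ (act (h : G₁) x) : Aˣ) : A) = ω₁ h (ω₂ x))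
    (x : G₂) :
    (fun g : G₁ => ((ω₂ (act g⁻¹ x) : Aˣ) : A)) ∈ stmt15C H₁ ω₁ := by
  intro g h
  show ((ω₂ (act (g * (h : G₁))⁻¹ x) : Aˣ) : A) = (ω₁ h)⁻¹ ((ω₂ (act g⁻¹ x) : Aˣ) : A)
  have h1 : (g * (h : G₁))⁻¹ = ((h⁻¹ : H₁) : G₁) * g⁻¹ := by simp
  rw [h1, map_mul]
  have h2 := hax5 h⁻¹ (act g⁻¹ x)
  simp only [MulAut.mul_apply] at h2 ⊢
  rw [h2, map_inv]

/-- W(x) as an element of C. -/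
def stmt15Wel (act : G₁ →* MulAut G₂) (H₁ : Subgroup G₁)
    (ω₁ : H₁ →* RingAut A) (ω₂ : G₂ →* Aˣ)
    (hax5 : ∀ (h : H₁) (x : G₂), ((ω₂ (act (h : G₁) x) : Aˣ) : A) = ω₁ h (ω₂ x))
    (x : G₂) : (stmt15C H₁ ω₁ : Subring (G₁ → A)) :=
  ⟨fun g : G₁ => ((ω₂ (act g⁻¹ x) : Aˣ) : A), stmt15_W_mem act H₁ ω₁ ω₂ hax5 x⟩

variable (act : G₁ →* MulAut G₂) (H₁ : Subgroup G₁)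
    (ω₁ : H₁ →* RingAut A) (ω₂ : G₂ →* Aˣ)
    (hax5 : ∀ (h : H₁) (x : G₂), ((ω₂ (act (h : G₁) x) : Aˣ) : A) = ω₁ h (ω₂ x))

theorem stmt15Wel_mul (x y : G₂) :
    stmt15Wel act H₁ ω₁ ω₂ hax5 x * stmt15Wel act H₁ ω₁ ω₂ hax5 y
      = stmt15Wel act H₁ ω₁ ω₂ hax5 (x * y) := by
  refine Subtype.ext (funext fun g => ?_)
  show ((ω₂ (act g⁻¹ x) : Aˣ) : A) * ((ω₂ (act g⁻¹ y) : Aˣ) : A)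
      = ((ω₂ (act g⁻¹ (x * y)) : Aˣ) : A)
  rw [map_mul, map_mul, Units.val_mul]

theorem stmt15Wel_one : stmt15Wel act H₁ ω₁ ω₂ hax5 1 = 1 := by
  refine Subtype.ext (funext fun g => ?_)
  show ((ω₂ (act g⁻¹ 1) : Aˣ) : A) = 1
  simp

/-- W as a group homomorphism to units of C. -/
def stmt15W : G₂ →* ((stmt15C H₁ ω₁ : Subring (G₁ → A)))ˣ where
  toFun x := ⟨stmt15Wel act H₁ ω₁ ω₂ hax5 x, stmt15Wel act H₁ ω₁ ω₂ hax5 x⁻¹,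
    by rw [stmt15Wel_mul, mul_inv_cancel, stmt15Wel_one],
    by rw [stmt15Wel_mul, inv_mul_cancel, stmt15Wel_one]⟩
  map_one' := Units.ext (stmt15Wel_one act H₁ ω₁ ω₂ hax5)
  map_mul' x y := Units.ext (stmt15Wel_mul act H₁ ω₁ ω₂ hax5 x y).symm

end Aux

/-- Induction of a strict `(G₂ → H₁)`-algebra `A` to a strict
`𝒢`-algebra, realized on the ring `C` of `ω₁`-equivariant functions `G₁ → A`:
`C` is a subring of the function ring, `Ω(g₀)(f) := f(g₀⁻¹·–)` gives a group
homomorphism `G₁ → RingAut(C)`, `W(x) := (g ↦ ω₂(^{g⁻¹}x))` gives a group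
homomorphism `G₂ → Cˣ`, `Ω(∂x)` is conjugation by `W(x)`, and `Ω(g)(W(x)) = W(ᵍx)`. -/
theorem stmt_15 {G₁ G₂ A : Type*} [Group G₁] [Group G₂] [Ring A]
    (act : G₁ →* MulAut G₂) (d : G₂ →* G₁)
    (hdact : ∀ (g : G₁) (x : G₂), d (act g x) = g * d x * g⁻¹)
    (hPeiffer : ∀ y x : G₂, act (d y) x = y * x * y⁻¹)
    (H₁ : Subgroup G₁) (him : ∀ x : G₂, d x ∈ H₁)
    (ω₁ : H₁ →* RingAut A) (ω₂ : G₂ →* Aˣ)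
    (hax3 : ∀ (x : G₂) (a : A),
      ω₁ ⟨d x, him x⟩ a = (ω₂ x : A) * a * (((ω₂ x)⁻¹ : Aˣ) : A))
    (hax5 : ∀ (h : H₁) (x : G₂), ((ω₂ (act (h : G₁) x) : Aˣ) : A) = ω₁ h (ω₂ x)) :
    ∃ C : Subring (G₁ → A),
      (∀ f : G₁ → A,
        f ∈ C ↔ ∀ (g : G₁) (h : H₁), f (g * (h : G₁)) = (ω₁ h)⁻¹ (f g)) ∧
      ∃ (Ω : G₁ →* RingAut ↥C) (W : G₂ →* (↥C)ˣ),
        (∀ (g₀ : G₁) (f : ↥C) (g : G₁),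
          ((Ω g₀ f : ↥C) : G₁ → A) g = ((f : ↥C) : G₁ → A) (g₀⁻¹ * g)) ∧
        (∀ (x : G₂) (g : G₁),
          (((W x : (↥C)ˣ) : ↥C) : G₁ → A) g = ((ω₂ (act g⁻¹ x) : Aˣ) : A)) ∧
        (∀ (x : G₂) (f : ↥C),
          Ω (d x) f = ((W x : (↥C)ˣ) : ↥C) * f * (((W x)⁻¹ : (↥C)ˣ) : ↥C)) ∧
        (∀ (g : G₁) (x : G₂),
          Units.map (Ω g).toRingHom.toMonoidHom (W x) = W (act g x)) := by
  refine ⟨stmt15C H₁ ω₁, fun f => Iff.rfl,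
    stmt15Omega H₁ ω₁, stmt15W act H₁ ω₁ ω₂ hax5, ?_, ?_, ?_, ?_⟩
  · intro g₀ f g; rfl
  · intro x g; rfl
  · -- conjugation
    intro x f
    refine Subtype.ext (funext fun g => ?_)
    show (f : G₁ → A) ((d x)⁻¹ * g)
      = ((ω₂ (act g⁻¹ x) : Aˣ) : A) * (f : G₁ → A) g * ((ω₂ (act g⁻¹ x⁻¹) : Aˣ) : A)
    have h2 : ((ω₂ (act g⁻¹ x⁻¹) : Aˣ) : A) = (((ω₂ (act g⁻¹ x))⁻¹ : Aˣ) : A) := by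
      rw [map_inv, map_inv]
    rw [h2, ← hax3 (act g⁻¹ x) ((f : G₁ → A) g)]
    set h : H₁ := ⟨d (act g⁻¹ x), him _⟩ with hh
    have key : (d x)⁻¹ * g = g * ((h⁻¹ : H₁) : G₁) := by
      show (d x)⁻¹ * g = g * (d (act g⁻¹ x))⁻¹
      rw [hdact]; group
    rw [key, f.2 g h⁻¹, map_inv, inv_inv]
  · -- equivariance of W
    intro g x
    refine Units.ext (Subtype.ext (funext fun g' => ?_))
    show ((ω₂ (act (g⁻¹ * g')⁻¹ x) : Aˣ) : A) = ((ω₂ (act g'⁻¹ (act g x)) : Aˣ) : A)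
    have h3 : act g'⁻¹ (act g x) = act (g⁻¹ * g')⁻¹ x := by
      rw [← MulAut.mul_apply, ← map_mul]
      congr 1; group
    rw [h3]
end

section
/- Let 𝒢 = (G₂ →∂ G₁) be a crossed module, H₁ ≤ G₁ a subgroup containing im(∂), and (A, ω₁, ω₂) a strict (G₂ → H₁)-algebra (ω₁ : H₁ → RingAut(A) and ω₂ : G₂ → Aˣ group homomorphisms with ω₁(∂x)(a) = ω₂(x)·a·ω₂(x)⁻¹ and ω₂(ʰx) = ω₁(h)(ω₂(x))). Let C := { f : G₁ → A | f(g·h) = ω₁(h)⁻¹(f(g)) for all g ∈ G₁, h ∈ H₁ } with pointwise ring operations, and let Ω(g₀)(f) := f(g₀⁻¹·–) and W(x) := (g ↦ ω₂(^{g⁻¹}x)) be the induced strict 𝒢-algebra structure on C. Then evaluation at the identity, ε : C → A, ε(f) := f(e), is a unital ring homomorphism satisfying ε(Ω(h)(f)) = ω₁(h)(ε(f)) for all h ∈ H₁ and f ∈ C, and ε(W(x)) = ω₂(x) for all x ∈ G₂; that is, ε is a strict morphism of (G₂ → H₁)-algebras from the restriction of the induced algebra back to A. -/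
/-- Evaluation at the identity, `ε(f) := f(e)`, is a unital ring
homomorphism from the induced algebra `C = Ind Res` (the ring of `ω₁`-equivariant
functions `G₁ → A`) back to `A`, intertwining the `H₁`-actions (`ε(Ω(h)f) = ω₁(h)(ε f)`)
and compatible with the units (`ε(W(x)) = ω₂(x)`); i.e. `ε` is a strict morphism of
`(G₂ → H₁)`-algebras `Res Ind A → A`. -/
theorem stmt_16 {G₁ G₂ A : Type*} [Group G₁] [Group G₂] [Ring A]
    (act : G₁ →* MulAut G₂) (d : G₂ →* G₁)
    (hdact : ∀ (g : G₁) (x : G₂), d (act g x) = g * d x * g⁻¹)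
    (hPeiffer : ∀ y x : G₂, act (d y) x = y * x * y⁻¹)
    (H₁ : Subgroup G₁) (him : ∀ x : G₂, d x ∈ H₁)
    (ω₁ : H₁ →* RingAut A) (ω₂ : G₂ →* Aˣ)
    (hax3 : ∀ (x : G₂) (a : A),
      ω₁ ⟨d x, him x⟩ a = (ω₂ x : A) * a * (((ω₂ x)⁻¹ : Aˣ) : A))
    (hax5 : ∀ (h : H₁) (x : G₂), ((ω₂ (act (h : G₁) x) : Aˣ) : A) = ω₁ h (ω₂ x)) :
    ∃ C : Subring (G₁ → A),
      (∀ f : G₁ → A,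
        f ∈ C ↔ ∀ (g : G₁) (h : H₁), f (g * (h : G₁)) = (ω₁ h)⁻¹ (f g)) ∧
      ∃ ε : ↥C →+* A,
        (∀ f : ↥C, ε f = ((f : ↥C) : G₁ → A) 1) ∧
        (∀ (h : H₁) (f f' : ↥C),
          (∀ g : G₁, ((f' : ↥C) : G₁ → A) g = ((f : ↥C) : G₁ → A) ((h : G₁)⁻¹ * g)) →
            ε f' = ω₁ h (ε f)) ∧
        (∀ (x : G₂) (u : ↥C),
          (∀ g : G₁, ((u : ↥C) : G₁ → A) g = ((ω₂ (act g⁻¹ x) : Aˣ) : A)) →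
            ε u = ((ω₂ x : Aˣ) : A)) := by
  refine ⟨{ carrier := {f | ∀ (g : G₁) (h : H₁), f (g * (h : G₁)) = (ω₁ h)⁻¹ (f g)}
            one_mem' := by intro g h; simp
            mul_mem' := by intro f₁ f₂ h1 h2 g h; simp [Pi.mul_apply, h1 g h, h2 g h, map_mul]
            zero_mem' := by intro g h; simp
            add_mem' := by intro f₁ f₂ h1 h2 g h; simp [Pi.add_apply, h1 g h, h2 g h, map_add]
            neg_mem' := by intro f hf g h; simp [Pi.neg_apply, hf g h, map_neg] }, ?_, ?_⟩
  · intro f; rfl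
  · refine ⟨(Pi.evalRingHom (fun _ : G₁ => A) 1).comp (Subring.subtype _), fun f => rfl, ?_, ?_⟩
    · intro h f f' hff'
      have hf := f.2
      simp only [Subring.mem_mk, Set.mem_setOf_eq] at hf
      have := hff' 1
      simp only [mul_one] at this
      have h2 : ((f : G₁ → A)) ((h : G₁)⁻¹) = (ω₁ h⁻¹)⁻¹ ((f : G₁ → A) 1) := by
        have := hf 1 h⁻¹
        simpa using this
      show ((f' : G₁ → A)) 1 = _
      rw [this, h2]
      simp [map_inv]
    · intro x u hu
      have := hu 1
      show ((u : G₁ → A)) 1 = _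
      simpa using this
end

section
/- Let 𝒢 = (G₂ →∂ G₁) be a crossed module, H₁ ≤ G₁ a subgroup containing im(∂), and let (B, ω₁, ω₂) be a strict 𝒢-algebra: ω₁ : G₁ → RingAut(B) and ω₂ : G₂ → Bˣ group homomorphisms with ω₁(∂x)(b) = ω₂(x)·b·ω₂(x)⁻¹ and ω₂(ᵍx) = ω₁(g)(ω₂(x)). Let C := { f : G₁ → B | f(g·h) = ω₁(h)⁻¹(f(g)) for all g ∈ G₁, h ∈ H₁ } with pointwise ring operations, G₁-action Ω(g₀)(f) := f(g₀⁻¹·–) and units W(x) := (g ↦ ω₂(^{g⁻¹}x)) (the algebra induced from the restriction of B to (G₂ → H₁)). Then the map η : B → C defined by η(b)(g) := ω₁(g)⁻¹(b) is a unital ring homomorphism satisfying η(ω₁(g₀)(b)) = Ω(g₀)(η(b)) for all g₀ ∈ G₁, b ∈ B, and η(ω₂(x)) = W(x) for all x ∈ G₂; that is, η is a strict morphism of 𝒢-algebras B → Ind Res B. -/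
private def indSubring {G₁ B : Type*} [Group G₁] [Ring B]
    (H₁ : Subgroup G₁) (ω₁ : G₁ →* RingAut B) : Subring (G₁ → B) where
  carrier := {f | ∀ (g h : G₁), h ∈ H₁ → f (g * h) = (ω₁ h)⁻¹ (f g)}
  mul_mem' {a b} ha hb g h hh := by
    simp only [Pi.mul_apply, ha g h hh, hb g h hh, map_mul]
  add_mem' {a b} ha hb g h hh := by
    simp only [Pi.add_apply, ha g h hh, hb g h hh, map_add]
  one_mem' g h hh := by simp
  zero_mem' g h hh := by simp
  neg_mem' {a} ha g h hh := by simp only [Pi.neg_apply, ha g h hh, map_neg]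

/-- For a strict `𝒢`-algebra `B` and the algebra `C` induced from the
restriction of `B` to `(G₂ → H₁)` (the ring of equivariant functions `G₁ → B`),
the map `η(b)(g) := ω₁(g)⁻¹(b)` is a unital ring homomorphism `B → C` intertwining
the `G₁`-actions and the units; i.e. a strict morphism of `𝒢`-algebras
`B → Ind Res B`. -/
theorem stmt_17 {G₁ G₂ B : Type*} [Group G₁] [Group G₂] [Ring B]
    (act : G₁ →* MulAut G₂) (d : G₂ →* G₁)
    (hdact : ∀ (g : G₁) (x : G₂), d (act g x) = g * d x * g⁻¹)
    (hPeiffer : ∀ y x : G₂, act (d y) x = y * x * y⁻¹)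
    (H₁ : Subgroup G₁) (him : ∀ x : G₂, d x ∈ H₁)
    (ω₁ : G₁ →* RingAut B) (ω₂ : G₂ →* Bˣ)
    (hax3 : ∀ (x : G₂) (b : B),
      ω₁ (d x) b = (ω₂ x : B) * b * (((ω₂ x)⁻¹ : Bˣ) : B))
    (hax5 : ∀ (g : G₁) (x : G₂), ((ω₂ (act g x) : Bˣ) : B) = ω₁ g (ω₂ x)) :
    ∃ C : Subring (G₁ → B),
      (∀ f : G₁ → B,
        f ∈ C ↔ ∀ (g h : G₁), h ∈ H₁ → f (g * h) = (ω₁ h)⁻¹ (f g)) ∧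
      ∃ η : B →+* ↥C,
        (∀ (b : B) (g : G₁), ((η b : ↥C) : G₁ → B) g = (ω₁ g)⁻¹ b) ∧
        (∀ (g₀ : G₁) (b : B) (g : G₁),
          ((η (ω₁ g₀ b) : ↥C) : G₁ → B) g = ((η b : ↥C) : G₁ → B) (g₀⁻¹ * g)) ∧
        (∀ (x : G₂) (g : G₁),
          ((η ((ω₂ x : Bˣ) : B) : ↥C) : G₁ → B) g = ((ω₂ (act g⁻¹ x) : Bˣ) : B)) := by
  refine ⟨indSubring H₁ ω₁, fun f => Iff.rfl, ?_⟩
  have hmem : ∀ b : B, (fun g => (ω₁ g)⁻¹ b) ∈ indSubring H₁ ω₁ := by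
    intro b g h _
    show (ω₁ (g * h))⁻¹ b = _
    rw [map_mul, mul_inv_rev]
    rfl
  refine ⟨{ toFun := fun b => ⟨fun g => (ω₁ g)⁻¹ b, hmem b⟩
            map_one' := by ext g; simp
            map_mul' := by intro a b; ext g; simp
            map_zero' := by ext g; simp
            map_add' := by intro a b; ext g; simp }, fun b g => rfl, ?_, ?_⟩
  · intro g₀ b g
    show (ω₁ g)⁻¹ (ω₁ g₀ b) = (ω₁ (g₀⁻¹ * g))⁻¹ b
    rw [map_mul, mul_inv_rev, map_inv, inv_inv]
    rfl
  · intro x g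
    show (ω₁ g)⁻¹ ((ω₂ x : Bˣ) : B) = _
    rw [hax5 g⁻¹ x, map_inv]
end

section
/- Let G be a finite group, A an associative unital ring, ω₁ : G → RingAut(A) a group homomorphism, and ω₃ : G × G → Aˣ a normalized 2-cocycle whose values commute with every element of A, i.e. ω₃(g,e) = ω₃(e,g) = 1 and ω₃(g₃g₂,g₁)·ω₃(g₃,g₂) = ω₃(g₃,g₂g₁)·ω₁(g₃)(ω₃(g₂,g₁)). Then ω₃ is realizable: there exist a left A-module M on which A acts faithfully and, for each g ∈ G, an additive bijection 𝔭(g) : M → M, such that 𝔭(e) = id, 𝔭(g)(a • m) = ω₁(g)(a) • 𝔭(g)(m) for all a ∈ A and m ∈ M, and 𝔭(g₂·g₁)(m) = ω₃(g₂,g₁) • 𝔭(g₂)(𝔭(g₁)(m)) for all g₁, g₂ ∈ G and m ∈ M. -/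
/-- For a finite group `G`, an action `ω₁ : G → RingAut(A)` and a
normalized 2-cocycle `ω₃ ∈ Z²(G, Aˣ)` with values commuting with all of `A`, the
cocycle `ω₃` is realizable: there is a faithful `A`-module `M` with additive
bijections `𝔭(g)` that are `ω₁(g)`-semilinear and compose projectively with
factor `ω₃`. -/
theorem stmt_18 {G : Type v} {A : Type u} [Group G] [Finite G] [Ring A]
    (ω₁ : G →* RingAut A)
    (ω₃ : G → G → Aˣ)
    (hω₃l : ∀ g : G, ω₃ 1 g = 1) (hω₃r : ∀ g : G, ω₃ g 1 = 1)
    (hcentral : ∀ (g h : G) (a : A), (ω₃ g h : A) * a = a * (ω₃ g h : A))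
    (hcocycle : ∀ g₃ g₂ g₁ : G,
      (ω₃ (g₃ * g₂) g₁ : A) * (ω₃ g₃ g₂ : A)
        = (ω₃ g₃ (g₂ * g₁) : A) * ω₁ g₃ ((ω₃ g₂ g₁ : Aˣ) : A)) :
    ∃ (M : Type (max u v)) (_ : AddCommGroup M) (_ : Module A M)
      (𝔭 : G → M ≃+ M),
      (∀ a₁ a₂ : A, (∀ m : M, a₁ • m = a₂ • m) → a₁ = a₂) ∧
      𝔭 1 = AddEquiv.refl M ∧
      (∀ (g : G) (a : A) (m : M), 𝔭 g (a • m) = ω₁ g a • 𝔭 g m) ∧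
      (∀ (g₂ g₁ : G) (m : M),
        𝔭 (g₂ * g₁) m = ((ω₃ g₂ g₁ : Aˣ) : A) • 𝔭 g₂ (𝔭 g₁ m)) := by
  refine ⟨G → A, inferInstance, inferInstance, ?_⟩
  refine ⟨fun g => {
    toFun := fun f x => ω₁ g (f (g⁻¹ * x)) * ((ω₃ g (g⁻¹ * x))⁻¹ : Aˣ)
    invFun := fun f x => (ω₁ g).symm (f (g * x) * (ω₃ g x : A))
    left_inv := by
      intro f; funext x
      simp only [inv_mul_cancel_left, mul_assoc, Units.inv_mul, mul_one]
      exact (ω₁ g).symm_apply_apply _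
    right_inv := by
      intro f; funext x
      simp only [mul_inv_cancel_left]
      rw [RingEquiv.apply_symm_apply, mul_assoc, Units.mul_inv, mul_one]
    map_add' := by
      intro f₁ f₂; funext x
      simp [add_mul]
  }, ?_, ?_, ?_, ?_⟩
  · intro a₁ a₂ h
    have := congrFun (h (fun _ => 1)) 1
    simpa using this
  · ext f x
    show (ω₁ 1) (f ((1:G)⁻¹ * x)) * ((ω₃ 1 ((1:G)⁻¹ * x))⁻¹ : Aˣ) = f x
    rw [inv_one, one_mul, hω₃l, map_one ω₁, inv_one, Units.val_one, mul_one]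
    rfl
  · intro g a f
    funext x
    show ω₁ g ((a • f) (g⁻¹ * x)) * ((ω₃ g (g⁻¹ * x))⁻¹ : Aˣ)
      = ω₁ g a * (ω₁ g (f (g⁻¹ * x)) * ((ω₃ g (g⁻¹ * x))⁻¹ : Aˣ))
    rw [Pi.smul_apply, smul_eq_mul, map_mul, mul_assoc]
  · intro g₂ g₁ f
    funext x
    show ω₁ (g₂ * g₁) (f ((g₂ * g₁)⁻¹ * x)) * ((ω₃ (g₂ * g₁) ((g₂ * g₁)⁻¹ * x))⁻¹ : Aˣ)
      = (ω₃ g₂ g₁ : A) *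
        (ω₁ g₂ (ω₁ g₁ (f (g₁⁻¹ * (g₂⁻¹ * x))) * ((ω₃ g₁ (g₁⁻¹ * (g₂⁻¹ * x)))⁻¹ : Aˣ)) *
          ((ω₃ g₂ (g₂⁻¹ * x))⁻¹ : Aˣ))
    set y := (g₂ * g₁)⁻¹ * x with hy
    have h1 : g₁⁻¹ * (g₂⁻¹ * x) = y := by rw [hy, mul_inv_rev, mul_assoc]
    have h2 : g₂⁻¹ * x = g₁ * y := by rw [← h1, mul_inv_cancel_left]
    rw [h1, h2]
    have hDω : (ω₁ (g₂ * g₁)) (f y) = ω₁ g₂ (ω₁ g₁ (f y)) := by rw [map_mul]; rfl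
    rw [hDω, map_mul (ω₁ g₂)]
    set D := ω₁ g₂ (ω₁ g₁ (f y)) with hD
    have hP : ((ω₃ (g₂ * g₁) y : Aˣ) : A) *
        ((ω₃ g₂ g₁ : A) * (ω₁ g₂ (((ω₃ g₁ y)⁻¹ : Aˣ) : A) * ((ω₃ g₂ (g₁ * y))⁻¹ : Aˣ))) = 1 := by
      rw [← mul_assoc, hcocycle g₂ g₁ y, mul_assoc, ← mul_assoc (ω₁ g₂ ((ω₃ g₁ y : Aˣ) : A)),
        ← map_mul, Units.mul_inv, map_one, one_mul, Units.mul_inv]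
    have hkey : (ω₃ g₂ g₁ : A) * (ω₁ g₂ (((ω₃ g₁ y)⁻¹ : Aˣ) : A) * ((ω₃ g₂ (g₁ * y))⁻¹ : Aˣ))
        = ((ω₃ (g₂ * g₁) y)⁻¹ : Aˣ) := by
      refine (Units.mul_right_inj (ω₃ (g₂ * g₁) y)).mp ?_
      rw [hP, Units.mul_inv]
    calc D * ((ω₃ (g₂ * g₁) y)⁻¹ : Aˣ)
        = D * ((ω₃ g₂ g₁ : A) * (ω₁ g₂ (((ω₃ g₁ y)⁻¹ : Aˣ) : A) * ((ω₃ g₂ (g₁ * y))⁻¹ : Aˣ))) := by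
          rw [hkey]
      _ = (ω₃ g₂ g₁ : A) * (D * ω₁ g₂ (((ω₃ g₁ y)⁻¹ : Aˣ) : A) * ((ω₃ g₂ (g₁ * y))⁻¹ : Aˣ)) := by
          rw [← mul_assoc, ← hcentral, mul_assoc, mul_assoc]
end

section
/- Let 𝒢 = (G₂ →∂ G₁) be a crossed module with a Z₂-grading, i.e. a group homomorphism π : G₁ → {±1} with im(∂) ⊆ G₀ := ker(π), and assume π is surjective; fix ς ∈ G₁ with π(ς) = −1. Let A be a ring with a strict 𝒢₀-algebra structure, where 𝒢₀ = (G₂ → G₀): group homomorphisms ω₁ : G₀ → RingAut(A) and ω₂ : G₂ → Aˣ with ω₁(∂x)(a) = ω₂(x)·a·ω₂(x)⁻¹ and ω₂(ᵍx) = ω₁(g)(ω₂(x)) for all g ∈ G₀. On the product ring Ã := A × Aᵐᵒᵖ define: for g ∈ G₀, ω̃₁(g)(a, op(b)) := (ω₁(g)(a), op(ω₁(ς⁻¹gς)(b))); for f ∈ G₁ with π(f) = −1, ω̃₁(f)(a, op(b)) := (ω₁(fς)(b), op(ω₁(ς⁻¹f)(a))); and ω̃₂(x) := (ω₂(x), op(ω₂(^{ς⁻¹}x)⁻¹))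 for x ∈ G₂. Then: (i) for g ∈ G₀ the map ω̃₁(g) is a ring automorphism of Ã, while for f with π(f) = −1 the map ω̃₁(f) is an additive bijection with ω̃₁(f)(1) = 1 that reverses multiplication, ω̃₁(f)(ξ·ζ) = ω̃₁(f)(ζ)·ω̃₁(f)(ξ); (ii) ω̃₁(g₂·g₁) = ω̃₁(g₂) ∘ ω̃₁(g₁) as maps Ã → Ã for all g₁, g₂ ∈ G₁; (iii) ω̃₂ : G₂ → Ãˣ is a group homomorphism; (iv) ω̃₁(∂x)(ξ) = ω̃₂(x)·ξ·ω̃₂(x)⁻¹ for all x ∈ G₂ and ξ ∈ Ã; (v) ω̃₂(ᵍx) = ω̃₁(g)(ω̃₂(x)) if π(g) = +1 and ω̃₂(ᵍx) = ω̃₁(g)(ω̃₂(x)⁻¹) if π(g) = −1, for all g ∈ G₁ and x ∈ G₂. -/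
/-- The hyperbolic induction action `ω̃₁` on `Ã := A × Aᵐᵒᵖ`: even elements act
diagonally (via `ω₁(g)` and `ω₁(ς⁻¹gς)`), odd elements swap the factors
(via `ω₁(fς)` and `ω₁(ς⁻¹f)`). -/
noncomputable def wt1 {G₁ A : Type*} [Group G₁] [Ring A]
    (π : G₁ →* ℤˣ) (ω₁ : G₁ → A ≃+* A) (ς : G₁)
    (g : G₁) (ξ : A × Aᵐᵒᵖ) : A × Aᵐᵒᵖ :=
  if π g = 1 then
    (ω₁ g ξ.1, MulOpposite.op (ω₁ (ς⁻¹ * g * ς) ξ.2.unop))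
  else
    (ω₁ (g * ς) ξ.2.unop, MulOpposite.op (ω₁ (ς⁻¹ * g) ξ.1))

/-- The hyperbolic induction units `ω̃₂(x) := (ω₂(x), op(ω₂(^{ς⁻¹}x)⁻¹))` in
`Ã = A × Aᵐᵒᵖ`. -/
def wt2 {G₁ G₂ A : Type*} [Group G₁] [Group G₂] [Ring A]
    (act : G₁ →* MulAut G₂) (ω₂ : G₂ →* Aˣ) (ς : G₁) (x : G₂) : A × Aᵐᵒᵖ :=
  (((ω₂ x : Aˣ) : A), MulOpposite.op ((((ω₂ (act ς⁻¹ x))⁻¹ : Aˣ) : A)))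

/-- Hyperbolic induction of a strict `𝒢₀`-algebra `A` to a strict
`Z₂`-graded `𝒢`-algebra structure on `Ã = A × Aᵐᵒᵖ`: even elements act by ring
automorphisms, odd elements by anti-automorphisms, `ω̃₁` is multiplicative, `ω̃₂` is
a group homomorphism into `Ãˣ`, `ω̃₁(∂x)` is conjugation by `ω̃₂(x)`, and `ω̃₂` is
equivariant (with an inverse twist on odd elements). -/
theorem stmt_19 {G₁ G₂ A : Type*} [Group G₁] [Group G₂] [Ring A]
    (act : G₁ →* MulAut G₂) (d : G₂ →* G₁)
    (hdact : ∀ (g : G₁) (x : G₂), d (act g x) = g * d x * g⁻¹)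
    (hPeiffer : ∀ y x : G₂, act (d y) x = y * x * y⁻¹)
    (π : G₁ →* ℤˣ) (hπd : ∀ x : G₂, π (d x) = 1)
    (ς : G₁) (hς : π ς = -1)
    (ω₁ : G₁ → A ≃+* A) (hω₁e : ω₁ 1 = RingEquiv.refl A)
    (hω₁mul : ∀ g h : G₁, π g = 1 → π h = 1 → ∀ a : A, ω₁ (g * h) a = ω₁ g (ω₁ h a))
    (ω₂ : G₂ →* Aˣ)
    (hax3 : ∀ (x : G₂) (a : A),
      ω₁ (d x) a = (ω₂ x : A) * a * (((ω₂ x)⁻¹ : Aˣ) : A))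
    (hax5 : ∀ (g : G₁) (x : G₂), π g = 1 →
      ((ω₂ (act g x) : Aˣ) : A) = ω₁ g ((ω₂ x : Aˣ) : A)) :
    (∀ g : G₁, π g = 1 →
      (∀ ξ ζ : A × Aᵐᵒᵖ, wt1 π ω₁ ς g (ξ + ζ) = wt1 π ω₁ ς g ξ + wt1 π ω₁ ς g ζ) ∧
      wt1 π ω₁ ς g 1 = 1 ∧
      (∀ ξ ζ : A × Aᵐᵒᵖ, wt1 π ω₁ ς g (ξ * ζ) = wt1 π ω₁ ς g ξ * wt1 π ω₁ ς g ζ) ∧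
      Function.Bijective (wt1 π ω₁ ς g)) ∧
    (∀ f : G₁, π f = -1 →
      (∀ ξ ζ : A × Aᵐᵒᵖ, wt1 π ω₁ ς f (ξ + ζ) = wt1 π ω₁ ς f ξ + wt1 π ω₁ ς f ζ) ∧
      wt1 π ω₁ ς f 1 = 1 ∧
      (∀ ξ ζ : A × Aᵐᵒᵖ, wt1 π ω₁ ς f (ξ * ζ) = wt1 π ω₁ ς f ζ * wt1 π ω₁ ς f ξ) ∧
      Function.Bijective (wt1 π ω₁ ς f)) ∧
    (∀ (g₂ g₁ : G₁) (ξ : A × Aᵐᵒᵖ),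
      wt1 π ω₁ ς (g₂ * g₁) ξ = wt1 π ω₁ ς g₂ (wt1 π ω₁ ς g₁ ξ)) ∧
    ∃ W : G₂ →* (A × Aᵐᵒᵖ)ˣ,
      (∀ x : G₂, ((W x : (A × Aᵐᵒᵖ)ˣ) : A × Aᵐᵒᵖ) = wt2 act ω₂ ς x) ∧
      (∀ (x : G₂) (ξ : A × Aᵐᵒᵖ),
        wt1 π ω₁ ς (d x) ξ
          = ((W x : (A × Aᵐᵒᵖ)ˣ) : A × Aᵐᵒᵖ) * ξ
            * (((W x)⁻¹ : (A × Aᵐᵒᵖ)ˣ) : A × Aᵐᵒᵖ)) ∧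
      (∀ (g : G₁) (x : G₂), π g = 1 →
        wt2 act ω₂ ς (act g x) = wt1 π ω₁ ς g (wt2 act ω₂ ς x)) ∧
      (∀ (g : G₁) (x : G₂), π g = -1 →
        wt2 act ω₂ ς (act g x)
          = wt1 π ω₁ ς g ((((W x)⁻¹ : (A × Aᵐᵒᵖ)ˣ) : A × Aᵐᵒᵖ))) := by
  have hpar : ∀ g : G₁, π g = 1 ∨ π g = -1 := fun g => Int.units_eq_one_or (π g)
  have hwt1e : ∀ g : G₁, π g = 1 → ∀ ξ : A × Aᵐᵒᵖ,
      wt1 π ω₁ ς g ξ = (ω₁ g ξ.1, MulOpposite.op (ω₁ (ς⁻¹ * g * ς) ξ.2.unop)) := by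
    intro g h ξ; simp [wt1, h]
  have hwt1o : ∀ g : G₁, π g = -1 → ∀ ξ : A × Aᵐᵒᵖ,
      wt1 π ω₁ ς g ξ = (ω₁ (g * ς) ξ.2.unop, MulOpposite.op (ω₁ (ς⁻¹ * g) ξ.1)) := by
    intro g h ξ
    have : ¬ (π g = 1) := by rw [h]; decide
    simp [wt1, this]
  -- multiplicativity of wt1
  have hmul : ∀ (g₂ g₁ : G₁) (ξ : A × Aᵐᵒᵖ),
      wt1 π ω₁ ς (g₂ * g₁) ξ = wt1 π ω₁ ς g₂ (wt1 π ω₁ ς g₁ ξ) := by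
    intro g₂ g₁ ξ
    rcases hpar g₂ with h₂ | h₂ <;> rcases hpar g₁ with h₁ | h₁
    · rw [hwt1e _ h₁, hwt1e _ h₂, hwt1e _ (by simp [map_mul, h₁, h₂])]
      refine Prod.ext ?_ ?_ <;> simp only [MulOpposite.unop_op]
      · exact hω₁mul g₂ g₁ h₂ h₁ ξ.1
      · have e : ς⁻¹ * (g₂ * g₁) * ς = (ς⁻¹ * g₂ * ς) * (ς⁻¹ * g₁ * ς) := by group
        rw [e, hω₁mul _ _ (by simp only [map_mul, map_inv, hς, h₂]; decide)
          (by simp only [map_mul, map_inv, hς, h₁]; decide)]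
    · rw [hwt1o _ h₁, hwt1e _ h₂,
        hwt1o _ (by simp only [map_mul, h₂, h₁]; decide)]
      refine Prod.ext ?_ ?_ <;> simp only [MulOpposite.unop_op]
      · have e : g₂ * g₁ * ς = g₂ * (g₁ * ς) := by group
        rw [e, hω₁mul _ _ h₂ (by simp only [map_mul, hς, h₁]; decide)]
      · have e : ς⁻¹ * (g₂ * g₁) = (ς⁻¹ * g₂ * ς) * (ς⁻¹ * g₁) := by group
        rw [e, hω₁mul _ _ (by simp only [map_mul, map_inv, hς, h₂]; decide)
          (by simp only [map_mul, map_inv, hς, h₁]; decide)]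
    · rw [hwt1e _ h₁, hwt1o _ h₂,
        hwt1o _ (by simp only [map_mul, h₂, h₁]; decide)]
      refine Prod.ext ?_ ?_ <;> simp only [MulOpposite.unop_op]
      · have e : g₂ * g₁ * ς = (g₂ * ς) * (ς⁻¹ * g₁ * ς) := by group
        rw [e, hω₁mul _ _ (by simp only [map_mul, hς, h₂]; decide)
          (by simp only [map_mul, map_inv, hς, h₁]; decide)]
      · have e : ς⁻¹ * (g₂ * g₁) = (ς⁻¹ * g₂) * g₁ := by group
        rw [e, hω₁mul _ _ (by simp only [map_mul, map_inv, hς, h₂]; decide) h₁]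
    · rw [hwt1o _ h₁, hwt1o _ h₂,
        hwt1e _ (by simp only [map_mul, h₂, h₁]; decide)]
      refine Prod.ext ?_ ?_ <;> simp only [MulOpposite.unop_op]
      · have e : g₂ * g₁ = (g₂ * ς) * (ς⁻¹ * g₁) := by group
        rw [e, hω₁mul _ _ (by simp only [map_mul, hς, h₂]; decide)
          (by simp only [map_mul, map_inv, hς, h₁]; decide)]
      · have e : ς⁻¹ * (g₂ * g₁) * ς = (ς⁻¹ * g₂) * (g₁ * ς) := by group
        rw [e, hω₁mul _ _ (by simp only [map_mul, map_inv, hς, h₂]; decide)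
          (by simp only [map_mul, hς, h₁]; decide)]
  have hone : ∀ ξ : A × Aᵐᵒᵖ, wt1 π ω₁ ς 1 ξ = ξ := by
    intro ξ
    rw [hwt1e 1 (map_one π)]
    simp [hω₁e]
  have hbij : ∀ g : G₁, Function.Bijective (wt1 π ω₁ ς g) := by
    intro g
    refine Function.bijective_iff_has_inverse.mpr ⟨wt1 π ω₁ ς g⁻¹, fun ξ => ?_, fun ξ => ?_⟩
    · rw [← hmul]; simp [hone]
    · rw [← hmul]; simp [hone]
  -- wt2 lemmas
  have hw2mul : ∀ x y : G₂, wt2 act ω₂ ς (x * y) = wt2 act ω₂ ς x * wt2 act ω₂ ς y := by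
    intro x y
    refine Prod.ext ?_ ?_
    · simp [wt2]
    · simp [wt2, map_mul, mul_inv_rev, ← MulOpposite.op_mul]
  have hw2one : wt2 act ω₂ ς 1 = 1 := by
    simp [wt2, Prod.ext_iff]
  have hax5inv : ∀ (g : G₁) (x : G₂), π g = 1 →
      ((((ω₂ (act g x))⁻¹ : Aˣ) : A)) = ω₁ g ((((ω₂ x)⁻¹ : Aˣ) : A)) := by
    intro g x hg
    refine Units.inv_eq_of_mul_eq_one_right ?_
    rw [hax5 g x hg, ← map_mul]
    simp
  have hcomp : ∀ (a b : G₁) (y : G₂), act (a * b) y = act a (act b y) := by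
    intro a b y; rw [map_mul]; rfl
  refine ⟨?_, ?_, hmul, ?_⟩
  · intro g hg
    refine ⟨fun ξ ζ => ?_, ?_, fun ξ ζ => ?_, hbij g⟩
    · simp [hwt1e g hg, map_add]
    · rw [hwt1e g hg]; simp
    · simp [hwt1e g hg, map_mul, Prod.ext_iff, ← MulOpposite.op_mul]
  · intro f hf
    refine ⟨fun ξ ζ => ?_, ?_, fun ξ ζ => ?_, hbij f⟩
    · simp [hwt1o f hf, map_add]
    · rw [hwt1o f hf]; simp
    · simp [hwt1o f hf, map_mul, Prod.ext_iff, ← MulOpposite.op_mul]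
  · refine ⟨{ toFun := fun x => ⟨wt2 act ω₂ ς x, wt2 act ω₂ ς x⁻¹,
                (by rw [← hw2mul]; simp [hw2one]), (by rw [← hw2mul]; simp [hw2one])⟩
              map_one' := (by ext : 1; simpa using hw2one)
              map_mul' := fun x y => (by ext : 1; simpa using hw2mul x y) },
      fun x => rfl, ?_, ?_, ?_⟩
    · -- conjugation
      intro x ξ
      show wt1 π ω₁ ς (d x) ξ = wt2 act ω₂ ς x * ξ * wt2 act ω₂ ς x⁻¹
      rw [hwt1e _ (hπd x)]
      have e2 : ς⁻¹ * d x * ς = d (act ς⁻¹ x) := by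
        rw [hdact ς⁻¹ x, inv_inv]
      refine Prod.ext ?_ ?_
      · simp only [Prod.fst_mul]
        rw [hax3 x ξ.1]
        show _ = (↑(ω₂ x) : A) * ξ.1 * (↑(ω₂ x⁻¹) : A)
        rw [map_inv]
      · simp only [Prod.snd_mul]
        rw [e2, hax3 (act ς⁻¹ x) ξ.2.unop]
        have hinv : (wt2 act ω₂ ς x⁻¹).2 = MulOpposite.op ((ω₂ (act ς⁻¹ x) : Aˣ) : A) := by
          show MulOpposite.op (((ω₂ (act ς⁻¹ x⁻¹))⁻¹ : Aˣ) : A) = _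
          rw [map_inv (act ς⁻¹), map_inv ω₂, inv_inv]
        rw [hinv]
        show MulOpposite.op _ = MulOpposite.op ((↑(ω₂ (act ς⁻¹ x))⁻¹ : Aˣ) : A) * ξ.2
          * MulOpposite.op ((ω₂ (act ς⁻¹ x) : Aˣ) : A)
        rw [← MulOpposite.op_unop ξ.2]
        simp only [MulOpposite.unop_op, ← MulOpposite.op_mul, mul_assoc]
    · -- equivariance on even elements
      intro g x hg
      rw [hwt1e g hg]
      have hpar' : π (ς⁻¹ * g * ς) = 1 := by
        simp only [map_mul, map_inv, hς, hg]; decide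
      refine Prod.ext ?_ ?_
      · simpa [wt2] using hax5 g x hg
      · have e : act ς⁻¹ (act g x) = act (ς⁻¹ * g * ς) (act ς⁻¹ x) := by
          rw [← hcomp, ← hcomp, mul_inv_cancel_right]
        simp only [wt2, MulOpposite.unop_op]
        rw [e]
        exact congrArg MulOpposite.op (hax5inv (ς⁻¹ * g * ς) (act ς⁻¹ x) hpar')
    · -- equivariance on odd elements
      intro g x hg
      show wt2 act ω₂ ς (act g x) = wt1 π ω₁ ς g (wt2 act ω₂ ς x⁻¹)
      rw [hwt1o g hg]
      refine Prod.ext ?_ ?_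
      · have e : act (g * ς) (act ς⁻¹ x) = act g x := by
          rw [← hcomp, mul_inv_cancel_right]
        have h5 := hax5 (g * ς) (act ς⁻¹ x)
          (by simp only [map_mul, hς, hg]; decide)
        rw [e] at h5
        simpa [wt2] using h5
      · have e : act ς⁻¹ (act g x) = act (ς⁻¹ * g) x := (hcomp ς⁻¹ g x).symm
        have h5 := hax5inv (ς⁻¹ * g) x
          (by simp only [map_mul, map_inv, hς, hg]; decide)
        rw [← e] at h5
        simp only [wt2, MulOpposite.unop_op]
        simpa using congrArg MulOpposite.op h5
end
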